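/- arXiv:1801.01793 — 6 statements merged into one kernel-verified Lean document; each statement's English description precedes it below -/
import Mathlib

section
/- Consider minimizing Σ_{l=1}^L p_l φ_l over φ ∈ [0,1]^L subject to Σ_{l=1}^L p_l φ_l R_l = u, where p_l > 0 for all l, R_1 > R_2 > … > R_L ≥ 0, u ≥ 0, and the constraint set is nonempty. Then every minimizer φ* of this linear program satisfies φ*_1 ≥ φ*_2 ≥ … ≥ φ*_L. -/
/-!
Exchange argument. If `i < j` but `φ i < φ j`, move time from the slower state `j` to the
faster state `i`: raising `φ i` by `ε p_j R_j` and lowering `φ j` by `ε p_i R_i` leaves the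
throughput unchanged and changes the total time by `ε p_i p_j (R_j - R_i) < 0`. For small
`ε > 0` this stays in the box since `φ i < 1` and `φ j > 0`, contradicting minimality.
-/

open Filter Topology

theorem exists_pos_mul_le {a b x y : ℝ} (ha : 0 < a) (hb : 0 < b) :
    ∃ ε > 0, ε * x ≤ a ∧ ε * y ≤ b := by
  have hx : ∀ᶠ ε in 𝓝 (0 : ℝ), ε * x < a :=
    (continuous_mul_const x).tendsto' 0 0 (zero_mul x) |>.eventually (gt_mem_nhds ha)
  have hy : ∀ᶠ ε in 𝓝 (0 : ℝ), ε * y < b :=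
    (continuous_mul_const y).tendsto' 0 0 (zero_mul y) |>.eventually (gt_mem_nhds hb)
  obtain ⟨ε, ⟨hεx, hεy⟩, hε⟩ :=
    ((hx.and hy).filter_mono nhdsWithin_le_nhds).and self_mem_nhdsWithin |>.exists (f := 𝓝[>] 0)
  exact ⟨ε, hε, hεx.le, hεy.le⟩

section
variable {ι : Type*} [Fintype ι] [DecidableEq ι]

theorem sum_mul_add_single_sub_single (w φ : ι → ℝ) (i j : ι) (s t : ℝ) :
    ∑ l, w l * (φ + Pi.single i s - Pi.single j t : ι → ℝ) l
      = ∑ l, w l * φ l + w i * s - w j * t := by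
  change w ⬝ᵥ (φ + Pi.single i s - Pi.single j t) = w ⬝ᵥ φ + w i * s - w j * t
  rw [dotProduct_sub, dotProduct_add, dotProduct_single, dotProduct_single]

theorem exists_cheaper_of_lt {p R φ : ι → ℝ} {i j : ι} (hpi : 0 < p i) (hpj : 0 < p j)
    (hR : R j < R i) (hRj : 0 ≤ R j) (hφ : ∀ l, φ l ∈ Set.Icc (0 : ℝ) 1) (hφij : φ i < φ j) :
    ∃ ψ : ι → ℝ, (∀ l, ψ l ∈ Set.Icc (0 : ℝ) 1) ∧
      ∑ l, p l * ψ l * R l = ∑ l, p l * φ l * R l ∧ ∑ l, p l * ψ l < ∑ l, p l * φ l := by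
  have hij : i ≠ j := fun h => hφij.ne (congrArg φ h)
  have hRi : 0 < R i := hRj.trans_lt hR
  obtain ⟨ε, hε, hεi, hεj⟩ := exists_pos_mul_le (x := p j * R j) (y := p i * R i)
    (sub_pos.2 (hφij.trans_le (hφ j).2)) ((hφ i).1.trans_lt hφij)
  refine ⟨φ + Pi.single i (ε * (p j * R j)) - Pi.single j (ε * (p i * R i)), fun l => ?_, ?_, ?_⟩
  · obtain ⟨hφl0, hφl1⟩ := hφ l
    by_cases hli : l = i
    · subst hli
      have : 0 ≤ ε * (p j * R j) := by positivity
      simp only [Pi.sub_apply, Pi.add_apply, Pi.single_eq_same, Pi.single_eq_of_ne hij,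
        sub_zero, Set.mem_Icc]
      constructor <;> linarith
    by_cases hlj : l = j
    · subst hlj
      have : 0 ≤ ε * (p i * R i) := by positivity
      simp only [Pi.sub_apply, Pi.add_apply, Pi.single_eq_same, Pi.single_eq_of_ne hli,
        add_zero, Set.mem_Icc]
      constructor <;> linarith
    · simpa [hli, hlj] using hφ l
  · simp_rw [mul_right_comm (p _) _ (R _)]
    rw [sum_mul_add_single_sub_single]
    ring
  · have hsaving : p i * (ε * (p j * R j)) - p j * (ε * (p i * R i))
        = ε * p i * p j * (R j - R i) := by ring
    have : ε * p i * p j * (R j - R i) < 0 :=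
      mul_neg_of_pos_of_neg (by positivity) (sub_neg.2 hR)
    rw [sum_mul_add_single_sub_single]
    linarith
end

theorem stmt3_general (L : ℕ)
    (p : Fin L → ℝ) (hp : ∀ l, 0 < p l)
    (R : Fin L → ℝ) (hR : StrictAnti R) (hRnn : ∀ l, 0 ≤ R l)
    (u : ℝ)
    (φstar : Fin L → ℝ)
    (hmem : (∀ l, φstar l ∈ Set.Icc (0 : ℝ) 1) ∧ ∑ l, p l * φstar l * R l = u)
    (hmin : ∀ ψ : Fin L → ℝ,
      ((∀ l, ψ l ∈ Set.Icc (0 : ℝ) 1) ∧ ∑ l, p l * ψ l * R l = u) →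
        ∑ l, p l * φstar l ≤ ∑ l, p l * ψ l) :
    Antitone φstar := by
  intro i j hij
  by_contra! hφij
  have hij' : i < j := hij.lt_of_ne (fun h => hφij.ne (congrArg φstar h))
  obtain ⟨ψ, hψ, hψR, hψp⟩ :=
    exists_cheaper_of_lt (hp i) (hp j) (hR hij') (hRnn j) hmem.1 hφij
  exact (hmin ψ ⟨hψ, hψR.trans hmem.2⟩).not_gt hψp

/-- Structure of minimizers of the time-fraction linear program: minimizing the total
time fraction `∑ l, p l * φ l` over `φ ∈ [0,1]^L` subject to achieving throughput
`∑ l, p l * φ l * R l = u`, where the positive-probability states are indexed with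
strictly decreasing rates `R`, every minimizer is nonincreasing in the state index. -/
theorem stmt3 (L : ℕ) (hL : 1 ≤ L)
    (p : Fin L → ℝ) (hp : ∀ l, 0 < p l)
    (R : Fin L → ℝ) (hR : StrictAnti R) (hRnn : ∀ l, 0 ≤ R l)
    (u : ℝ) (hu : 0 ≤ u)
    (φstar : Fin L → ℝ)
    (hmem : (∀ l, φstar l ∈ Set.Icc (0 : ℝ) 1) ∧ ∑ l, p l * φstar l * R l = u)
    (hmin : ∀ ψ : Fin L → ℝ,
      ((∀ l, ψ l ∈ Set.Icc (0 : ℝ) 1) ∧ ∑ l, p l * ψ l * R l = u) →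
        ∑ l, p l * φstar l ≤ ∑ l, p l * ψ l) :
    Antitone φstar :=
  stmt3_general L p hp R hR hRnn u φstar hmem hmin
end

section
/- Let L ≥ 1, let R_1 ≥ R_2 ≥ … ≥ R_L ≥ 0, and let p, q be probability vectors on {1,…,L} with Σ_{l=1}^m q_l ≥ Σ_{l=1}^m p_l for every m. For u ≥ 0 let F_p(u) := { φ ∈ [0,1]^L : Σ_l p_l φ_l R_l = u }. If F_p(u) is nonempty, then F_q(u) is nonempty, and the minimum of Σ_l q_l φ_l over F_q(u) is at most the minimum of Σ_l p_l φ_l over F_p(u); i.e., under the stochastically dominating distribution q the throughput u can be achieved using no more total time than under p. -/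
/-!
Pass from the time-sharing vector `φ` to the time masses `a l = p l * φ l ∈ [0, p l]`. Their
partial sums `A k` are bounded by those of `p`, hence by those of `q`, and by the total time
`S = A L`. The masses `b` whose partial sums are `min (Q k) S` fit under `q`, use total time at
most `S`, and dominate `a` in partial sums, so Abel summation against the nonnegative,
nonincreasing rates gives `∑ b l * R l ≥ ∑ a l * R l = u`. Scaling `b` by
`u / ∑ b l * R l ∈ [0, 1]` and dividing by `q` yields an admissible vector under `q`.
-/

open Finset

/-- For a probability vector `μ` over the `L` channel states with rates `R`, the set of
time-sharing vectors `φ ∈ [0,1]^L` achieving throughput exactly `u`. -/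
def AchieveSet (L : ℕ) (μ R : Fin L → ℝ) (u : ℝ) : Set (Fin L → ℝ) :=
  {φ | (∀ l, φ l ∈ Set.Icc (0 : ℝ) 1) ∧ ∑ l, μ l * φ l * R l = u}

section Abel

variable {α : Type*} [CommRing α]

theorem sum_range_mul_eq_sum_partialSums_mul_sub (a R : ℕ → α) (n : ℕ) :
    ∑ i ∈ range n, a i * R i =
      ∑ k ∈ range n, (∑ i ∈ range (k + 1), a i) * (R k - R (k + 1)) +
        (∑ i ∈ range n, a i) * R n := by
  induction n with
  | zero => simp
  | succ n ih => rw [sum_range_succ, ih, sum_range_succ _ n, sum_range_succ a n]; ring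

theorem sum_range_mul_le_of_partialSums_le [PartialOrder α] [IsOrderedRing α] {a b R : ℕ → α}
    {n : ℕ} (hR : Antitone R) (hR₀ : ∀ i, 0 ≤ R i)
    (hab : ∀ k ≤ n, ∑ i ∈ range k, a i ≤ ∑ i ∈ range k, b i) :
    ∑ i ∈ range n, a i * R i ≤ ∑ i ∈ range n, b i * R i := by
  rw [sum_range_mul_eq_sum_partialSums_mul_sub a, sum_range_mul_eq_sum_partialSums_mul_sub b]
  refine add_le_add (sum_le_sum fun k hk => ?_)
    (mul_le_mul_of_nonneg_right (hab n le_rfl) (hR₀ n))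
  exact mul_le_mul_of_nonneg_right (hab _ (mem_range.1 hk)) (sub_nonneg.2 (hR k.le_succ))

end Abel

section Greedy

variable {α : Type*} [AddCommGroup α] [LinearOrder α] [IsOrderedAddMonoid α]

theorem min_add_sub_min_le {x d : α} (S : α) (hd : 0 ≤ d) : min (x + d) S - min x S ≤ d := by
  rw [sub_le_iff_le_add', ← min_add_add_right]
  exact min_le_min_left _ (le_add_of_nonneg_right hd)

theorem exists_partialSums_le_partialSums {a q : ℕ → α} {n : ℕ} (ha : ∀ i, 0 ≤ a i)
    (hq : ∀ i, 0 ≤ q i) (haq : ∀ k ≤ n, ∑ i ∈ range k, a i ≤ ∑ i ∈ range k, q i) :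
    ∃ b : ℕ → α, (∀ i, b i ∈ Set.Icc 0 (q i)) ∧
      ∑ i ∈ range n, b i ≤ ∑ i ∈ range n, a i ∧
      ∀ k ≤ n, ∑ i ∈ range k, a i ≤ ∑ i ∈ range k, b i := by
  set S := ∑ i ∈ range n, a i
  set Q : ℕ → α := fun k => ∑ i ∈ range k, q i
  have hS : 0 ≤ S := sum_nonneg fun i _ => ha i
  have hQ (i : ℕ) : Q (i + 1) = Q i + q i := sum_range_succ q i
  have hb (k : ℕ) : ∑ i ∈ range k, (min (Q (i + 1)) S - min (Q i) S) = min (Q k) S := by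
    rw [sum_range_sub (fun k => min (Q k) S)]
    simp [Q, hS]
  refine ⟨fun i => min (Q (i + 1)) S - min (Q i) S, fun i => ⟨?_, ?_⟩, ?_, fun k hk => ?_⟩
  all_goals dsimp only
  · rw [hQ, sub_nonneg]
    exact min_le_min_right S (le_add_of_nonneg_right (hq i))
  · rw [hQ]
    exact min_add_sub_min_le S (hq i)
  · rw [hb]
    exact min_le_right _ _
  · rw [hb]
    exact le_min (haq k hk) (sum_le_sum_of_subset_of_nonneg (range_mono hk) fun i _ _ => ha i)

end Greedy

def extendByZero {M : Type*} [Zero M] {L : ℕ} (f : Fin L → M) (i : ℕ) : M :=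
  if h : i < L then f ⟨i, h⟩ else 0

section extendByZero

variable {M : Type*} {L : ℕ}

@[simp]
theorem extendByZero_val [Zero M] (f : Fin L → M) (l : Fin L) : extendByZero f l = f l :=
  dif_pos l.isLt

theorem extendByZero_nonneg [Zero M] [Preorder M] {f : Fin L → M} (hf : ∀ l, 0 ≤ f l)
    (i : ℕ) : 0 ≤ extendByZero f i := by
  unfold extendByZero
  split_ifs
  exacts [hf _, le_rfl]

theorem extendByZero_le_extendByZero [Zero M] [Preorder M] {f g : Fin L → M}
    (hfg : ∀ l, f l ≤ g l) (i : ℕ) :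
    extendByZero f i ≤ extendByZero g i := by
  unfold extendByZero
  split_ifs
  exacts [hfg _, le_rfl]

theorem antitone_extendByZero [Zero M] [Preorder M] {f : Fin L → M} (hf : Antitone f)
    (hf₀ : ∀ l, 0 ≤ f l) :
    Antitone (extendByZero f) := by
  refine antitone_nat_of_succ_le fun i => ?_
  by_cases hi : i + 1 < L
  · rw [extendByZero, dif_pos hi, extendByZero, dif_pos (by omega)]
    exact hf (Fin.mk_le_mk.2 i.le_succ)
  · rw [extendByZero, dif_neg hi]
    exact extendByZero_nonneg hf₀ i

theorem sum_Iic_eq_sum_range_extendByZero [AddCommMonoid M] (f : Fin L → M) (m : Fin L) :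
    ∑ l ∈ Iic m, f l = ∑ i ∈ range (m + 1), extendByZero f i := by
  rw [Nat.range_succ_eq_Iic, ← Fin.map_valEmbedding_Iic, sum_map]
  simp

theorem sum_univ_eq_sum_range_extendByZero [AddCommMonoid M] (f : Fin L → M) :
    ∑ l, f l = ∑ i ∈ range L, extendByZero f i := by
  rw [← Fin.sum_univ_eq_sum_range]
  simp

theorem sum_univ_mul_eq_sum_range_extendByZero [NonUnitalNonAssocSemiring M]
    (f g : Fin L → M) :
    ∑ l, f l * g l = ∑ i ∈ range L, extendByZero f i * extendByZero g i := by
  rw [← Fin.sum_univ_eq_sum_range]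
  simp

end extendByZero

theorem mul_div_cancel_of_mem_Icc {α : Type*} [Field α] [PartialOrder α] {b q : α}
    (h : b ∈ Set.Icc 0 q) : q * (b / q) = b := by
  rcases eq_or_ne q 0 with rfl | hq
  · simp [le_antisymm h.2 h.1]
  · exact mul_div_cancel₀ b hq

section AchieveSet

variable {L : ℕ} {p q R b φ : Fin L → ℝ} {u : ℝ}

theorem div_mem_achieveSet (hb : ∀ l, b l ∈ Set.Icc 0 (q l)) :
    (fun l => b l / q l) ∈ AchieveSet L q R (∑ l, b l * R l) :=
  ⟨fun l => ⟨div_nonneg (hb l).1 ((hb l).1.trans (hb l).2), div_le_one_of_le₀ (hb l).2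
      ((hb l).1.trans (hb l).2)⟩,
    sum_congr rfl fun l _ => by rw [mul_div_cancel_of_mem_Icc (hb l)]⟩

theorem exists_mem_achieveSet_of_le_sum (hb : ∀ l, b l ∈ Set.Icc 0 (q l)) (hu : 0 ≤ u)
    (hub : u ≤ ∑ l, b l * R l) :
    ∃ ψ ∈ AchieveSet L q R u, ∑ l, q l * ψ l ≤ ∑ l, b l := by
  set T := ∑ l, b l * R l
  have hc : u / T ∈ Set.Icc (0 : ℝ) 1 :=
    ⟨div_nonneg hu (hu.trans hub), div_le_one_of_le₀ hub (hu.trans hub)⟩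
  have hcT : u / T * T = u := by
    rcases eq_or_ne T 0 with hT | hT
    · -- `u / 0 = 0` is still a valid scale, since then `u = 0`
      rw [hT, mul_zero]
      exact (le_antisymm (hT ▸ hub) hu).symm
    · exact div_mul_cancel₀ u hT
  have hcb (l : Fin L) : u / T * b l ∈ Set.Icc 0 (q l) :=
    ⟨mul_nonneg hc.1 (hb l).1, (mul_le_of_le_one_left (hb l).1 hc.2).trans (hb l).2⟩
  refine ⟨fun l => u / T * b l / q l, ?_, ?_⟩
  · convert div_mem_achieveSet (R := R) hcb
    simp_rw [mul_assoc, ← mul_sum]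
    exact hcT.symm
  · simp_rw [mul_div_cancel_of_mem_Icc (hcb _), ← mul_sum]
    exact mul_le_of_le_one_left (sum_nonneg fun l _ => (hb l).1) hc.2

theorem exists_mass_of_mem_achieveSet (hR : Antitone R) (hR₀ : ∀ l, 0 ≤ R l)
    (hp : ∀ l, 0 ≤ p l) (hq : ∀ l, 0 ≤ q l)
    (hpq : ∀ m : Fin L, ∑ l ∈ Iic m, p l ≤ ∑ l ∈ Iic m, q l)
    (hφ : φ ∈ AchieveSet L p R u) :
    ∃ b : Fin L → ℝ, (∀ l, b l ∈ Set.Icc 0 (q l)) ∧ ∑ l, b l ≤ ∑ l, p l * φ l ∧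
      u ≤ ∑ l, b l * R l := by
  obtain ⟨hφ₀₁, rfl⟩ := hφ
  have hmass (l : Fin L) : p l * φ l ∈ Set.Icc 0 (p l) :=
    ⟨mul_nonneg (hp l) (hφ₀₁ l).1, mul_le_of_le_one_right (hp l) (hφ₀₁ l).2⟩
  have hpartial : ∀ k ≤ L, ∑ i ∈ range k, extendByZero (fun l => p l * φ l) i ≤
      ∑ i ∈ range k, extendByZero q i := by
    rintro (_ | k) hk
    · simp
    · calc ∑ i ∈ range (k + 1), extendByZero (fun l => p l * φ l) i
          ≤ ∑ i ∈ range (k + 1), extendByZero p i :=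
            sum_le_sum fun i _ => extendByZero_le_extendByZero (fun l => (hmass l).2) i
        _ ≤ ∑ i ∈ range (k + 1), extendByZero q i := by
            simpa only [sum_Iic_eq_sum_range_extendByZero] using hpq ⟨k, hk⟩
  obtain ⟨b, hbq, hbsum, hbpartial⟩ := exists_partialSums_le_partialSums
    (extendByZero_nonneg fun l => (hmass l).1) (extendByZero_nonneg hq) hpartial
  refine ⟨fun l => b l, fun l => by simpa using hbq l, ?_, ?_⟩
  · rw [Fin.sum_univ_eq_sum_range b, sum_univ_eq_sum_range_extendByZero]
    exact hbsum
  · rw [sum_univ_mul_eq_sum_range_extendByZero]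
    refine (sum_range_mul_le_of_partialSums_le (antitone_extendByZero hR hR₀)
      (extendByZero_nonneg hR₀) hbpartial).trans_eq ?_
    rw [← Fin.sum_univ_eq_sum_range]
    simp

theorem exists_mem_achieveSet_sum_le_of_dominates (hR : Antitone R) (hR₀ : ∀ l, 0 ≤ R l)
    (hp : ∀ l, 0 ≤ p l) (hq : ∀ l, 0 ≤ q l)
    (hpq : ∀ m : Fin L, ∑ l ∈ Iic m, p l ≤ ∑ l ∈ Iic m, q l)
    (hφ : φ ∈ AchieveSet L p R u) :
    ∃ ψ ∈ AchieveSet L q R u, ∑ l, q l * ψ l ≤ ∑ l, p l * φ l := by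
  have hu : 0 ≤ u :=
    hφ.2 ▸ sum_nonneg fun l _ => mul_nonneg (mul_nonneg (hp l) (hφ.1 l).1) (hR₀ l)
  obtain ⟨b, hbq, hbsum, hub⟩ := exists_mass_of_mem_achieveSet hR hR₀ hp hq hpq hφ
  obtain ⟨ψ, hψ, hψsum⟩ := exists_mem_achieveSet_of_le_sum hbq hu hub
  exact ⟨ψ, hψ, hψsum.trans hbsum⟩

end AchieveSet

theorem stmt4_general (L : ℕ)
    (R : Fin L → ℝ) (hR : Antitone R) (hRnn : ∀ l, 0 ≤ R l)
    (p q : Fin L → ℝ) (hp : ∀ l, 0 ≤ p l) (hq : ∀ l, 0 ≤ q l)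
    (hdom : ∀ m : Fin L, ∑ l ∈ Finset.Iic m, p l ≤ ∑ l ∈ Finset.Iic m, q l)
    (u : ℝ)
    (hne : (AchieveSet L p R u).Nonempty) :
    (AchieveSet L q R u).Nonempty ∧
      sInf ((fun φ => ∑ l, q l * φ l) '' AchieveSet L q R u) ≤
        sInf ((fun φ => ∑ l, p l * φ l) '' AchieveSet L p R u) := by
  have key {φ} (hφ : φ ∈ AchieveSet L p R u) :=
    exists_mem_achieveSet_sum_le_of_dominates hR hRnn hp hq hdom hφ
  have hbdd : BddBelow ((fun ψ => ∑ l, q l * ψ l) '' AchieveSet L q R u) := by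
    refine ⟨0, ?_⟩
    rintro _ ⟨ψ, hψ, rfl⟩
    exact sum_nonneg fun l _ => mul_nonneg (hq l) (hψ.1 l).1
  refine ⟨?_, le_csInf (hne.image _) ?_⟩
  · obtain ⟨φ, hφ⟩ := hne
    obtain ⟨ψ, hψ, -⟩ := key hφ
    exact ⟨ψ, hψ⟩
  · rintro _ ⟨φ, hφ, rfl⟩
    obtain ⟨ψ, hψ, hle⟩ := key hφ
    exact (csInf_le hbdd ⟨ψ, hψ, rfl⟩).trans hle

/-- If the distribution `q` stochastically (prefix-sum) dominates `p` and the rates `R`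
are nonincreasing and nonnegative, then any throughput `u` achievable under `p` is also
achievable under `q`, and the minimum total time fraction needed under `q` is at most
the minimum needed under `p`. -/
theorem stmt4 (L : ℕ) (hL : 1 ≤ L)
    (R : Fin L → ℝ) (hR : Antitone R) (hRnn : ∀ l, 0 ≤ R l)
    (p q : Fin L → ℝ) (hp : ∀ l, 0 ≤ p l) (hq : ∀ l, 0 ≤ q l)
    (hp1 : ∑ l, p l = 1) (hq1 : ∑ l, q l = 1)
    (hdom : ∀ m : Fin L, ∑ l ∈ Finset.Iic m, p l ≤ ∑ l ∈ Finset.Iic m, q l)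
    (u : ℝ) (hu : 0 ≤ u)
    (hne : (AchieveSet L p R u).Nonempty) :
    (AchieveSet L q R u).Nonempty ∧
      sInf ((fun φ => ∑ l, q l * φ l) '' AchieveSet L q R u) ≤
        sInf ((fun φ => ∑ l, p l * φ l) '' AchieveSet L p R u) :=
  stmt4_general L R hR hRnn p q hp hq hdom u hne
end

section
/- Let K ≥ 1, let c_1,…,c_{K-1} ≥ 0 be fixed rates for users 1,…,K−1, let R_1 ≥ R_2 ≥ … ≥ R_L ≥ 0 be the possible rates of user K, and let p, q be probability vectors on {1,…,L} with Σ_{l=1}^m q_l ≥ Σ_{l=1}^m p_l for every m. Define, for a probability vector μ on {1,…,L}, Γ_μ := { u ∈ ℝ^K : there exists φ : {1,…,K} × {1,…,L} → [0,1] with Σ_{k=1}^K φ(k,l) ≤ 1 for every l, u_k = c_k · Σ_l μ_l φ(k,l) for every k < K, and u_K = Σ_l μ_l φ(K,l) R_l }. Then Γ_p ⊆ Γ_q; i.e., replacing the last user's channel distribution by a stochastically dominating one enlarges the per-state feasible rate region. -/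
/-!
Let `P` and `Q` be the cumulative sums of `p` and `q`. The quantile coupling
`π i j = |[Q i, Q (i+1)] ∩ [P j, P (j+1)]|` has marginals `q` and `p`, and prefix-sum domination
`P ≤ Q` forces `π i j = 0` for `j < i`. A schedule `φ` for `p` is transported to the schedule
`ψ k i = (∑ j, π i j * φ k j) / q i` for `q`: each `ψ · i` is an average of columns of `φ`, so it is
again a schedule; the first `n` users get exactly the same rates, and since `π` only moves mass
to states with at least the same rate, the last user gets at least as much. Scaling down the
last user's share then matches its rate exactly.
-/

open Finset

/-- The conditional rate region with users `0, …, n` (so `K = n + 1 ≥ 1` users): the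
first `n` users have frozen rates `c k`, the state `l` of the last user varies with
distribution `μ` and gives it rate `R l`; at most one user is scheduled at a time
(idling allowed), `φ k l` being the fraction of time user `k` is scheduled while the
last user's state is `l`. -/
def CondRateRegion (n L : ℕ) (c : Fin n → ℝ) (R : Fin L → ℝ) (μ : Fin L → ℝ) :
    Set (Fin (n + 1) → ℝ) :=
  {u | ∃ φ : Fin (n + 1) → Fin L → ℝ,
    (∀ k l, φ k l ∈ Set.Icc (0 : ℝ) 1) ∧
    (∀ l, ∑ k, φ k l ≤ 1) ∧
    (∀ k : Fin n, u k.castSucc = c k * ∑ l, μ l * φ k.castSucc l) ∧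
    u (Fin.last n) = ∑ l, μ l * φ (Fin.last n) l * R l}

def intervalOverlap (a b x y : ℝ) : ℝ := max 0 (min b y - max a x)

lemma intervalOverlap_nonneg (a b x y : ℝ) : 0 ≤ intervalOverlap a b x y := le_max_left _ _

lemma intervalOverlap_comm (a b x y : ℝ) : intervalOverlap a b x y = intervalOverlap x y a b := by
  rw [intervalOverlap, intervalOverlap, min_comm, max_comm a]

lemma intervalOverlap_eq_zero_of_le {a b x y : ℝ} (h : y ≤ a) : intervalOverlap a b x y = 0 :=
  max_eq_left (by linarith [min_le_right b y, le_max_left a x])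

lemma intervalOverlap_eq_sub {a b x y : ℝ} (hab : a ≤ b) (hxy : x ≤ y) :
    intervalOverlap a b x y = max a (min b y) - max a (min b x) := by
  grind [intervalOverlap]

lemma sum_range_intervalOverlap {a b : ℝ} (hab : a ≤ b) {x : ℕ → ℝ} (hx : Monotone x) {N : ℕ}
    (h0 : x 0 ≤ a) (hN : b ≤ x N) :
    ∑ j ∈ range N, intervalOverlap a b (x j) (x (j + 1)) = b - a := by
  rw [sum_congr rfl fun j _ => intervalOverlap_eq_sub hab (hx j.le_succ),
    sum_range_sub (fun t => max a (min b (x t))), min_eq_left hN, max_eq_right hab,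
    min_eq_right (h0.trans hab), max_eq_left h0]

section CumSum

variable {L : ℕ}

def cumSum (p : Fin L → ℝ) (m : ℕ) : ℝ := ∑ l : Fin L with l.val < m, p l

lemma cumSum_zero (p : Fin L → ℝ) : cumSum p 0 = 0 := by simp [cumSum]

lemma cumSum_mono {p : Fin L → ℝ} (hp : ∀ l, 0 ≤ p l) : Monotone (cumSum p) :=
  fun _ _ hab => sum_le_sum_of_subset_of_nonneg
    (monotone_filter_right _ fun _ _ h => h.trans_le hab) fun l _ _ => hp l

lemma cumSum_nonneg {p : Fin L → ℝ} (hp : ∀ l, 0 ≤ p l) (m : ℕ) : 0 ≤ cumSum p m :=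
  sum_nonneg fun l _ => hp l

lemma cumSum_of_le (p : Fin L → ℝ) {m : ℕ} (hm : L ≤ m) : cumSum p m = ∑ l, p l := by
  rw [cumSum, filter_true_of_mem fun l _ => l.isLt.trans_le hm]

lemma cumSum_le_sum {p : Fin L → ℝ} (hp : ∀ l, 0 ≤ p l) (m : ℕ) : cumSum p m ≤ ∑ l, p l :=
  sum_le_sum_of_subset_of_nonneg (filter_subset _ _) fun l _ _ => hp l

lemma cumSum_succ_eq_sum_Iic (p : Fin L → ℝ) (i : Fin L) :
    cumSum p (i + 1) = ∑ l ∈ Iic i, p l := by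
  rw [cumSum]
  refine sum_congr ?_ fun _ _ => rfl
  ext l
  simp only [mem_filter, mem_univ, true_and, mem_Iic, Fin.le_def]
  omega

lemma cumSum_succ (p : Fin L → ℝ) (i : Fin L) : cumSum p (i + 1) = cumSum p i + p i := by
  rw [cumSum_succ_eq_sum_Iic, ← Iio_insert, sum_insert (by simp), add_comm, cumSum]
  refine congrArg (· + _) (sum_congr ?_ fun _ _ => rfl)
  ext l
  simp only [mem_filter, mem_univ, true_and, mem_Iio, Fin.lt_def]

lemma cumSum_le_cumSum {p q : Fin L → ℝ} (hpq : ∑ l, p l = ∑ l, q l)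
    (hdom : ∀ m : Fin L, ∑ l ∈ Iic m, p l ≤ ∑ l ∈ Iic m, q l) (m : ℕ) :
    cumSum p m ≤ cumSum q m := by
  rcases m with _ | i
  · simp [cumSum_zero]
  rcases lt_or_ge i L with hi | hi
  · simpa only [← cumSum_succ_eq_sum_Iic] using hdom ⟨i, hi⟩
  · rw [cumSum_of_le p (by omega), cumSum_of_le q (by omega), hpq]

end CumSum

section Coupling

variable {α β : Type*} [Fintype β]

/-- When `q i = 0` this is `0`, by the convention `x / 0 = 0`. -/
noncomputable def condMean (π : α → β → ℝ) (q : α → ℝ) (f : β → ℝ) (i : α) : ℝ :=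
  (∑ j, π i j * f j) / q i

lemma sum_condMean {ι : Type*} [Fintype ι] (π : α → β → ℝ) (q : α → ℝ) (f : ι → β → ℝ)
    (i : α) : ∑ k, condMean π q (f k) i = condMean π q (fun j => ∑ k, f k j) i := by
  simp only [condMean, ← sum_div, mul_sum]
  rw [sum_comm]

variable [Fintype α]

structure IsCoupling (π : α → β → ℝ) (q : α → ℝ) (p : β → ℝ) : Prop where
  nonneg : ∀ i j, 0 ≤ π i j
  sum_row : ∀ i, ∑ j, π i j = q i
  sum_col : ∀ j, ∑ i, π i j = p j

namespace IsCoupling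

section

variable {π : α → β → ℝ} {q : α → ℝ} {p : β → ℝ}

lemma mul_condMean (h : IsCoupling π q p) (f : β → ℝ) (i : α) :
    q i * condMean π q f i = ∑ j, π i j * f j := by
  rcases eq_or_ne (q i) 0 with hq | hq
  · have hrow : ∀ j, π i j = 0 := fun j =>
      (sum_eq_zero_iff_of_nonneg fun j _ => h.nonneg i j).1 ((h.sum_row i).trans hq) j (mem_univ j)
    simp [hq, hrow]
  · exact mul_div_cancel₀ _ hq

lemma sum_mul_condMean (h : IsCoupling π q p) (f : β → ℝ) :
    ∑ i, q i * condMean π q f i = ∑ j, p j * f j := by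
  simp only [h.mul_condMean, ← h.sum_col, sum_mul]
  exact sum_comm

lemma condMean_nonneg (h : IsCoupling π q p) {f : β → ℝ} (hf : ∀ j, 0 ≤ f j) (i : α) :
    0 ≤ condMean π q f i :=
  div_nonneg (sum_nonneg fun j _ => mul_nonneg (h.nonneg i j) (hf j))
    (h.sum_row i ▸ sum_nonneg fun j _ => h.nonneg i j)

lemma condMean_le_one (h : IsCoupling π q p) {f : β → ℝ} (hf : ∀ j, f j ≤ 1) (i : α) :
    condMean π q f i ≤ 1 := by
  refine div_le_one_of_le₀ ?_ (h.sum_row i ▸ sum_nonneg fun j _ => h.nonneg i j)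
  calc ∑ j, π i j * f j ≤ ∑ j, π i j * 1 :=
        sum_le_sum fun j _ => mul_le_mul_of_nonneg_left (hf j) (h.nonneg i j)
    _ = q i := by rw [← h.sum_row i]; simp

end

lemma sum_mul_le_sum_condMean_mul_of_antitone [LinearOrder α] {π : α → α → ℝ} {q p : α → ℝ}
    (h : IsCoupling π q p) (hsupp : ∀ i j, j < i → π i j = 0) {R : α → ℝ} (hR : Antitone R)
    {f : α → ℝ} (hf : ∀ j, 0 ≤ f j) :
    ∑ j, p j * f j * R j ≤ ∑ i, q i * condMean π q f i * R i := by
  calc ∑ j, p j * f j * R j = ∑ i, ∑ j, π i j * f j * R j := by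
        simp only [← h.sum_col, sum_mul]
        exact sum_comm
    _ ≤ ∑ i, ∑ j, π i j * f j * R i := by
        refine sum_le_sum fun i _ => sum_le_sum fun j _ => ?_
        rcases lt_or_ge j i with hji | hij
        · simp [hsupp i j hji]
        · exact mul_le_mul_of_nonneg_left (hR hij) (mul_nonneg (h.nonneg i j) (hf j))
    _ = ∑ i, q i * condMean π q f i * R i := by simp only [h.mul_condMean, sum_mul]

end IsCoupling

end Coupling

section QuantileCoupling

variable {L : ℕ} {p q : Fin L → ℝ}

noncomputable def quantileCoupling (p q : Fin L → ℝ) (i j : Fin L) : ℝ :=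
  intervalOverlap (cumSum q i) (cumSum q (i + 1)) (cumSum p j) (cumSum p (j + 1))

lemma sum_intervalOverlap_cumSum (hp : ∀ l, 0 ≤ p l) {a b : ℝ} (hab : a ≤ b) (ha : 0 ≤ a)
    (hb : b ≤ ∑ l, p l) :
    ∑ j : Fin L, intervalOverlap a b (cumSum p j) (cumSum p (j + 1)) = b - a := by
  rw [Fin.sum_univ_eq_sum_range (fun j => intervalOverlap a b (cumSum p j) (cumSum p (j + 1)))]
  exact sum_range_intervalOverlap hab (cumSum_mono hp) (cumSum_zero p ▸ ha)
    (cumSum_of_le p le_rfl ▸ hb)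

lemma isCoupling_quantileCoupling (hp : ∀ l, 0 ≤ p l) (hq : ∀ l, 0 ≤ q l)
    (hpq : ∑ l, p l = ∑ l, q l) : IsCoupling (quantileCoupling p q) q p where
  nonneg _ _ := intervalOverlap_nonneg _ _ _ _
  sum_row i := by
    rw [← add_sub_cancel_left (cumSum q i) (q i), ← cumSum_succ]
    exact sum_intervalOverlap_cumSum hp (cumSum_mono hq i.val.le_succ) (cumSum_nonneg hq _)
      (hpq ▸ cumSum_le_sum hq _)
  sum_col j := by
    simp only [quantileCoupling, intervalOverlap_comm (cumSum q _)]
    rw [← add_sub_cancel_left (cumSum p j) (p j), ← cumSum_succ]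
    exact sum_intervalOverlap_cumSum hq (cumSum_mono hp j.val.le_succ) (cumSum_nonneg hp _)
      (hpq ▸ cumSum_le_sum hp _)

lemma quantileCoupling_eq_zero_of_lt (hq : ∀ l, 0 ≤ q l) (hdom : ∀ m, cumSum p m ≤ cumSum q m)
    {i j : Fin L} (hji : j < i) : quantileCoupling p q i j = 0 :=
  intervalOverlap_eq_zero_of_le ((hdom _).trans (cumSum_mono hq (Nat.succ_le_of_lt hji)))

end QuantileCoupling

lemma mem_condRateRegion_of_le {n L : ℕ} {c : Fin n → ℝ} {R μ : Fin L → ℝ}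
    {u : Fin (n + 1) → ℝ} (φ : Fin (n + 1) → Fin L → ℝ) (hφ : ∀ k l, φ k l ∈ Set.Icc (0 : ℝ) 1)
    (hφsum : ∀ l, ∑ k, φ k l ≤ 1)
    (hφc : ∀ k : Fin n, u k.castSucc = c k * ∑ l, μ l * φ k.castSucc l)
    (h0 : 0 ≤ u (Fin.last n)) (hle : u (Fin.last n) ≤ ∑ l, μ l * φ (Fin.last n) l * R l) :
    u ∈ CondRateRegion n L c R μ := by
  set S := ∑ l, μ l * φ (Fin.last n) l * R l
  set t := u (Fin.last n) / S
  have ht0 : 0 ≤ t := div_nonneg h0 (h0.trans hle)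
  have ht1 : t ≤ 1 := div_le_one_of_le₀ hle (h0.trans hle)
  have htS : t * S = u (Fin.last n) := by
    rcases eq_or_ne S 0 with hS | hS
    · simp only [t, hS, div_zero, zero_mul]
      linarith
    · exact div_mul_cancel₀ _ hS
  set ψ := Function.update φ (Fin.last n) (t • φ (Fin.last n))
  have hψ : ∀ k l, ψ k l ∈ Set.Icc 0 (φ k l) := by
    intro k l
    rcases eq_or_ne k (Fin.last n) with rfl | hk
    · simp only [ψ, Function.update_self, Pi.smul_apply, smul_eq_mul]
      exact ⟨mul_nonneg ht0 (hφ _ l).1, mul_le_of_le_one_left (hφ _ l).1 ht1⟩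
    · simp only [ψ, Function.update_of_ne hk]
      exact ⟨(hφ k l).1, le_rfl⟩
  refine ⟨ψ, fun k l => ⟨(hψ k l).1, (hψ k l).2.trans (hφ k l).2⟩,
    fun l => (sum_le_sum fun k _ => (hψ k l).2).trans (hφsum l), fun k => ?_, ?_⟩
  · simp only [ψ, Function.update_of_ne (Fin.castSucc_ne_last k), hφc]
  · simp only [ψ, Function.update_self, Pi.smul_apply, smul_eq_mul, ← htS, S, mul_sum]
    exact sum_congr rfl fun l _ => by ring

theorem stmt5_general (n L : ℕ) (c : Fin n → ℝ)
    (R : Fin L → ℝ) (hR : Antitone R) (hRnn : ∀ l, 0 ≤ R l)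
    (p q : Fin L → ℝ) (hp : ∀ l, 0 ≤ p l) (hq : ∀ l, 0 ≤ q l)
    (hp1 : ∑ l, p l = 1) (hq1 : ∑ l, q l = 1)
    (hdom : ∀ m : Fin L, ∑ l ∈ Finset.Iic m, p l ≤ ∑ l ∈ Finset.Iic m, q l) :
    CondRateRegion n L c R p ⊆ CondRateRegion n L c R q := by
  rintro u ⟨φ, hφ, hφsum, hφc, hφlast⟩
  have hpq : ∑ l, p l = ∑ l, q l := hp1.trans hq1.symm
  have hπ := isCoupling_quantileCoupling hp hq hpq
  have hsupp : ∀ i j, j < i → quantileCoupling p q i j = 0 := fun _ _ =>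
    quantileCoupling_eq_zero_of_lt hq (cumSum_le_cumSum hpq hdom)
  refine mem_condRateRegion_of_le (fun k => condMean (quantileCoupling p q) q (φ k))
    (fun k l => ⟨hπ.condMean_nonneg (fun j => (hφ k j).1) l,
      hπ.condMean_le_one (fun j => (hφ k j).2) l⟩)
    (fun l => sum_condMean _ _ φ l ▸ hπ.condMean_le_one hφsum l)
    (fun k => by rw [hφc, hπ.sum_mul_condMean]) ?_ ?_
  · rw [hφlast]
    exact sum_nonneg fun l _ => mul_nonneg (mul_nonneg (hp l) (hφ _ l).1) (hRnn l)
  · rw [hφlast]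
    exact hπ.sum_mul_le_sum_condMean_mul_of_antitone hsupp hR fun j => (hφ _ j).1

/-- Replacing the last user's channel distribution by a stochastically (prefix-sum)
dominating one enlarges the conditional feasible rate region: `Γ_p ⊆ Γ_q`. -/
theorem stmt5 (n L : ℕ) (hL : 1 ≤ L)
    (c : Fin n → ℝ) (hc : ∀ k, 0 ≤ c k)
    (R : Fin L → ℝ) (hR : Antitone R) (hRnn : ∀ l, 0 ≤ R l)
    (p q : Fin L → ℝ) (hp : ∀ l, 0 ≤ p l) (hq : ∀ l, 0 ≤ q l)
    (hp1 : ∑ l, p l = 1) (hq1 : ∑ l, q l = 1)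
    (hdom : ∀ m : Fin L, ∑ l ∈ Finset.Iic m, p l ≤ ∑ l ∈ Finset.Iic m, q l) :
    CondRateRegion n L c R p ⊆ CondRateRegion n L c R q :=
  stmt5_general n L c R hR hRnn p q hp hq hp1 hq1 hdom
end

section
/- Suppose the channel-rate vector has independent coordinates, i.e., p(r) = Π_{k=1}^K ℙ(R_k = r_k) for independent ℛ-valued random variables R_1,…,R_K, and suppose user i's channel stochastically dominates user j's channel: ℙ(R_i > a) ≥ ℙ(R_j > a) for all a ∈ ℝ. Then for every x ∈ 𝒳 with x_i = 0, the vector x′ obtained by swapping coordinates i and j (x′_i = x_j, x′_j = 0, and x′_m = x_m for m ∉ {i,j}) also belongs to 𝒳. -/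
open Finset

/-- The feasible throughput set of the wireless downlink with `K` users and
finite rate set `R ⊆ [0,∞)`: channel-rate vectors are `r : Fin K → ↥R` with
probability `p r`; in each state at most one user is scheduled (idling allowed). -/
def FeasibleSet (K : ℕ) (R : Finset ℝ) (p : (Fin K → ↥R) → ℝ) :
    Set (Fin K → ℝ) :=
  {x | ∃ φ : Fin K → (Fin K → ↥R) → ℝ,
    (∀ k r, φ k r ∈ Set.Icc (0 : ℝ) 1) ∧
    (∀ r, ∑ k, φ k r ≤ 1) ∧
    (∀ k, x k = ∑ r, φ k r * p r * (r k : ℝ))}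

/-! Relabelling users `i` and `j` turns a schedule for `p` into one for the law in which the two
users have exchanged their channel distributions. After the swap user `j` gets no throughput, so
its channel may be resampled from its true law. User `i` now has the law of `R_j`, which is
stochastically smaller than its true law: the quantile coupling gives a joint law of an old rate
`b` and a new rate `a` with `b ≤ a`, and serving user `i` at rate `a` with the old probability
scaled by `b / a` keeps its throughput without overloading any state. -/

/-- The length of `(u, w] ∩ (u', w']`. -/
def overlapLength (u w u' w' : ℝ) : ℝ := max 0 (min w w' - max u u')

lemma overlapLength_comm (u w u' w' : ℝ) :
    overlapLength u w u' w' = overlapLength u' w' u w := by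
  simp only [overlapLength, min_comm, max_comm]

lemma overlapLength_eq_clamp_sub_clamp {y x u w : ℝ} (hyx : y ≤ x) (huw : u ≤ w) :
    overlapLength y x u w = min x (max y w) - min x (max y u) := by
  unfold overlapLength
  grind

lemma overlapLength_eq_zero_of_le {u w u' w' : ℝ} (h : w' ≤ u) :
    overlapLength u w u' w' = 0 := by
  unfold overlapLength
  grind

theorem Finset.sum_sub_cumsum {α M N : Type*} [LinearOrder α] [AddCommMonoid M]
    [AddCommGroup N] (s : Finset α) (f : α → M) (g : M → N) :
    ∑ a ∈ s, (g (∑ v ∈ s with v ≤ a, f v) - g (∑ v ∈ s with v < a, f v)) =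
      g (∑ v ∈ s, f v) - g 0 := by
  induction s using Finset.induction_on_max with
  | empty => simp
  | insert a s hlt ih =>
    have ha : a ∉ s := fun h => lt_irrefl a (hlt a h)
    have hle : {v ∈ insert a s | v ≤ a} = insert a s :=
      filter_true_of_mem fun v hv => (mem_insert.mp hv).elim le_of_eq fun h => (hlt v h).le
    have hlt' : {v ∈ insert a s | v < a} = s := by
      rw [filter_insert, if_neg (lt_irrefl a), filter_true_of_mem hlt]
    have hold : ∀ b ∈ s,
        g (∑ v ∈ insert a s with v ≤ b, f v) - g (∑ v ∈ insert a s with v < b, f v) =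
          g (∑ v ∈ s with v ≤ b, f v) - g (∑ v ∈ s with v < b, f v) := fun b hb => by
      rw [filter_insert, filter_insert, if_neg (hlt b hb).not_ge, if_neg (hlt b hb).not_gt]
    rw [sum_insert ha, hle, hlt', sum_insert ha, sum_congr rfl hold, ih]
    abel

section QuantileCoupling

variable {α : Type*} [Fintype α] [LinearOrder α]

lemma sum_filter_le_eq_add {M : Type*} [AddCommMonoid M] (f : α → M) (a : α) :
    ∑ v with v ≤ a, f v = ∑ v with v < a, f v + f a := by
  have : univ.filter (· ≤ a) = insert a (univ.filter (· < a)) := by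
    ext v
    simp [le_iff_lt_or_eq, or_comm]
  rw [this, sum_insert (by simp), add_comm]

lemma sum_overlapLength_cdf {f : α → ℝ} (hf : ∀ v, 0 ≤ f v) (hf1 : ∑ v, f v = 1) {y x : ℝ}
    (hy : 0 ≤ y) (hyx : y ≤ x) (hx : x ≤ 1) :
    ∑ a, overlapLength y x (∑ v with v < a, f v) (∑ v with v ≤ a, f v) = x - y := by
  have hstep (a : α) : ∑ v with v < a, f v ≤ ∑ v with v ≤ a, f v := by
    rw [sum_filter_le_eq_add]
    linarith [hf a]
  rw [sum_congr rfl fun a _ => overlapLength_eq_clamp_sub_clamp hyx (hstep a),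
    sum_sub_cumsum univ f fun t => min x (max y t), hf1]
  simp [hy, hyx, hx, hyx.trans hx]

theorem exists_monotone_coupling {μ ν : α → ℝ} (hμ : ∀ v, 0 ≤ μ v) (hν : ∀ v, 0 ≤ ν v)
    (hμ1 : ∑ v, μ v = 1) (hν1 : ∑ v, ν v = 1)
    (hdom : ∀ a, ∑ v with a < v, μ v ≤ ∑ v with a < v, ν v) :
    ∃ π : α → α → ℝ, (∀ b a, 0 ≤ π b a) ∧ (∀ b, ∑ a, π b a = μ b) ∧
      (∀ a, ∑ b, π b a = ν a) ∧ ∀ b a, a < b → π b a = 0 := by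
  have hcdf (f : α → ℝ) (a : α) : ∑ v with v ≤ a, f v = ∑ v, f v - ∑ v with a < v, f v := by
    simp_rw [eq_sub_iff_add_eq, ← not_le]
    exact sum_filter_add_sum_filter_not _ _ _
  have hbounds {f : α → ℝ} (hf : ∀ v, 0 ≤ f v) (hf1 : ∑ v, f v = 1) (a : α) :
      0 ≤ ∑ v with v < a, f v ∧ ∑ v with v < a, f v ≤ ∑ v with v ≤ a, f v ∧
        ∑ v with v ≤ a, f v ≤ 1 := by
    refine ⟨sum_nonneg fun v _ => hf v, by rw [sum_filter_le_eq_add]; linarith [hf a], ?_⟩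
    rw [← hf1]
    exact sum_le_sum_of_subset_of_nonneg (filter_subset _ _) fun v _ _ => hf v
  -- the quantile coupling: `π b a` is the overlap of the slices `(F_μ(b⁻), F_μ(b)]` and
  -- `(F_ν(a⁻), F_ν(a)]` of `[0, 1]`
  refine ⟨fun b a => overlapLength (∑ v with v < b, μ v) (∑ v with v ≤ b, μ v)
    (∑ v with v < a, ν v) (∑ v with v ≤ a, ν v), fun b a => le_max_left _ _, fun b => ?_,
    fun a => ?_, fun b a hab => ?_⟩
  · obtain ⟨h0, h1, h2⟩ := hbounds hμ hμ1 b
    rw [sum_overlapLength_cdf hν hν1 h0 h1 h2, sum_filter_le_eq_add]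
    ring
  · obtain ⟨h0, h1, h2⟩ := hbounds hν hν1 a
    simp_rw [overlapLength_comm _ _ (∑ v with v < a, ν v)]
    rw [sum_overlapLength_cdf hμ hμ1 h0 h1 h2, sum_filter_le_eq_add]
    ring
  · apply overlapLength_eq_zero_of_le
    calc ∑ v with v ≤ a, ν v ≤ ∑ v with v ≤ a, μ v := by
          rw [hcdf, hcdf, hμ1, hν1]
          linarith [hdom a]
      _ ≤ ∑ v with v < b, μ v :=
          sum_le_sum_of_subset_of_nonneg
            (fun v => by simpa only [mem_filter, mem_univ, true_and] using (·.trans_lt hab))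
            fun v _ _ => hμ v

end QuantileCoupling

theorem Fintype.sum_sum_update {ι β M : Type*} [Fintype ι] [DecidableEq ι] [Fintype β]
    [AddCommMonoid M] (i : ι) (F : (ι → β) → β → M) :
    ∑ r, ∑ b, F r b = ∑ r, ∑ b, F (Function.update r i b) (r i) := by
  have hinv : Function.Involutive fun z : (ι → β) × β => (Function.update z.1 i z.2, z.1 i) := by
    rintro ⟨r, b⟩
    simp
  simp_rw [← Fintype.sum_prod_type']
  exact (Equiv.sum_comp (hinv.toPerm _) fun z => F z.1 z.2).symm

theorem Fintype.prod_update_apply {ι β M : Type*} [Fintype ι] [DecidableEq ι] [CommMonoid M]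
    (q : ι → β → M) (i : ι) (ν : β → M) (r : ι → β) :
    ∏ k, Function.update q i ν k (r k) = ν (r i) * ∏ k ∈ univ.erase i, q k (r k) := by
  rw [← mul_prod_erase _ _ (mem_univ i), Function.update_self]
  exact congrArg _ (Finset.prod_congr rfl fun k hk => by
    rw [Function.update_of_ne (ne_of_mem_erase hk)])

lemma mul_div_le_self_of_le {𝕜 : Type*} [Field 𝕜] [LinearOrder 𝕜] [IsStrictOrderedRing 𝕜]
    {t u v : 𝕜} (ht : 0 ≤ t) (hv : 0 ≤ v) (h : t ≠ 0 → u ≤ v) :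
    t * (u / v) ≤ t := by
  rcases eq_or_ne t 0 with rfl | ht0
  · simp
  · exact mul_le_of_le_one_right ht (div_le_one_of_le₀ (h ht0) hv)

lemma mul_div_mul_cancel_of_le {𝕜 : Type*} [Field 𝕜] [PartialOrder 𝕜] {t u v : 𝕜} (hu : 0 ≤ u)
    (h : t ≠ 0 → u ≤ v) :
    t * (u / v) * v = t * u := by
  rcases eq_or_ne t 0 with rfl | ht0
  · simp
  rcases eq_or_ne v 0 with rfl | hv0
  · simp [le_antisymm (h ht0) hu]
  · field_simp

section Feasibility

variable {K : ℕ} {R : Finset ℝ}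

theorem mem_feasibleSet_of_coupling (hR : ∀ r ∈ R, 0 ≤ r) {p p' : (Fin K → ↥R) → ℝ}
    {κ : (Fin K → ↥R) → (Fin K → ↥R) → ℝ} (hκ : ∀ r s, 0 ≤ κ r s)
    (hκ_new : ∀ r, ∑ s, κ r s = p' r) (hκ_old : ∀ s, ∑ r, κ r s = p s)
    {φ : Fin K → (Fin K → ↥R) → ℝ} (hφ : ∀ k s, 0 ≤ φ k s) (hsum : ∀ s, ∑ k, φ k s ≤ 1)
    (hdom : ∀ r s k, κ r s * φ k s ≠ 0 → (s k : ℝ) ≤ r k) :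
    (fun k => ∑ s, φ k s * p s * s k) ∈ FeasibleSet K R p' := by
  set ψ : Fin K → (Fin K → ↥R) → ℝ := fun k r => (∑ s, κ r s * φ k s * (s k / r k)) / p' r
  have hp' (r) : 0 ≤ p' r := hκ_new r ▸ sum_nonneg fun s _ => hκ r s
  have hψ0 (k r) : 0 ≤ ψ k r :=
    div_nonneg (sum_nonneg fun s _ => mul_nonneg (mul_nonneg (hκ r s) (hφ k s))
      (div_nonneg (hR _ (s k).2) (hR _ (r k).2))) (hp' r)
  have hψsum (r) : ∑ k, ψ k r ≤ 1 := by
    rw [← sum_div]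
    refine div_le_one_of_le₀ ?_ (hp' r)
    calc ∑ k, ∑ s, κ r s * φ k s * (s k / r k) ≤ ∑ s, ∑ k, κ r s * φ k s := by
          rw [sum_comm]
          exact sum_le_sum fun s _ => sum_le_sum fun k _ => mul_div_le_self_of_le
            (mul_nonneg (hκ r s) (hφ k s)) (hR _ (r k).2) (hdom r s k)
      _ ≤ ∑ s, κ r s := by
          refine sum_le_sum fun s _ => ?_
          rw [← mul_sum]
          exact mul_le_of_le_one_right (hκ r s) (hsum s)
      _ = p' r := hκ_new r
  refine ⟨ψ, fun k r => ⟨hψ0 k r, (single_le_sum (fun k _ => hψ0 k r) (mem_univ k)).trans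
    (hψsum r)⟩, hψsum, fun k => ?_⟩
  calc ∑ s, φ k s * p s * s k = ∑ s, ∑ r, κ r s * φ k s * s k := by
        simp_rw [← hκ_old, mul_sum, sum_mul]
        exact sum_congr rfl fun s _ => sum_congr rfl fun r _ => by ring
    _ = ∑ r, ∑ s, κ r s * φ k s * (s k / r k) * r k := by
        simp_rw [fun r s => mul_div_mul_cancel_of_le (hR _ (s k).2) (hdom r s k)]
        exact sum_comm
    _ = ∑ r, ψ k r * p' r * r k := by
        refine sum_congr rfl fun r _ => ?_
        rcases eq_or_ne (p' r) 0 with h0 | h0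
        · have hκ0 (s) : κ r s = 0 :=
            (sum_eq_zero_iff_of_nonneg fun s _ => hκ r s).mp ((hκ_new r).trans h0) s (mem_univ s)
          simp [h0, hκ0]
        · rw [div_mul_cancel₀ _ h0, sum_mul]

lemma exists_policy_of_apply_eq_zero {p : (Fin K → ↥R) → ℝ} {x : Fin K → ℝ}
    (hx : x ∈ FeasibleSet K R p) {i : Fin K} (hxi : x i = 0) :
    ∃ φ : Fin K → (Fin K → ↥R) → ℝ, (∀ k r, φ k r ∈ Set.Icc (0 : ℝ) 1) ∧
      (∀ r, ∑ k, φ k r ≤ 1) ∧ (∀ k, x k = ∑ r, φ k r * p r * (r k : ℝ)) ∧ ∀ r, φ i r = 0 := by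
  obtain ⟨φ, hφ, hsum, hthru⟩ := hx
  refine ⟨fun k r => if k = i then 0 else φ k r, fun k r => ?_, fun r => ?_, fun k => ?_,
    fun r => if_pos rfl⟩
  · dsimp only
    split_ifs
    exacts [⟨le_rfl, zero_le_one⟩, hφ k r]
  · refine le_trans (sum_le_sum fun k _ => ?_) (hsum r)
    dsimp only
    split_ifs
    exacts [(hφ k r).1, le_rfl]
  · by_cases hk : k = i
    · simp [hk, hxi]
    · simp [hk, hthru k]

lemma mem_feasibleSet_comp_perm {q : Fin K → ↥R → ℝ} (σ : Equiv.Perm (Fin K)) {x : Fin K → ℝ}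
    (hx : x ∈ FeasibleSet K R fun r => ∏ k, q k (r k)) :
    (fun m => x (σ m)) ∈ FeasibleSet K R fun r => ∏ k, q (σ k) (r k) := by
  obtain ⟨φ, hφ, hsum, hthru⟩ := hx
  let e : (Fin K → ↥R) ≃ (Fin K → ↥R) := σ.symm.arrowCongr (Equiv.refl _)
  refine ⟨fun k r => φ (σ k) (e.symm r), fun k r => hφ _ _, fun r => ?_, fun k => ?_⟩
  · rw [Equiv.sum_comp σ fun k => φ k (e.symm r)]
    exact hsum _
  · dsimp only
    rw [hthru]
    refine Fintype.sum_equiv e _ _ fun s => ?_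
    rw [e.symm_apply_apply]
    simp [e, Equiv.prod_comp σ fun k => q k (s k)]

open Function in
theorem mem_feasibleSet_update_of_coupling (hR : ∀ r ∈ R, 0 ≤ r) {q : Fin K → ↥R → ℝ}
    (hq : ∀ k v, 0 ≤ q k v) {i : Fin K} {ν : ↥R → ℝ} {π : ↥R → ↥R → ℝ}
    (hπ : ∀ b a, 0 ≤ π b a) (hrow : ∀ b, ∑ a, π b a = q i b) (hcol : ∀ a, ∑ b, π b a = ν a)
    {x : Fin K → ℝ} (hx : x ∈ FeasibleSet K R fun r => ∏ k, q k (r k))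
    (hmono : (∀ b a, a < b → π b a = 0) ∨ x i = 0) :
    x ∈ FeasibleSet K R fun r => ∏ k, update q i ν k (r k) := by
  obtain ⟨φ, hφ, hsum, hthru, hidle⟩ : ∃ φ : Fin K → (Fin K → ↥R) → ℝ,
      (∀ k r, φ k r ∈ Set.Icc (0 : ℝ) 1) ∧ (∀ r, ∑ k, φ k r ≤ 1) ∧
      (∀ k, x k = ∑ r, φ k r * (∏ k, q k (r k)) * (r k : ℝ)) ∧
      ∀ r b a, a < b → π b a * φ i r = 0 := by
    rcases hmono with hmono | hxi
    · obtain ⟨φ, h⟩ := hx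
      exact ⟨φ, h.1, h.2.1, h.2.2, fun r b a hab => by rw [hmono b a hab, zero_mul]⟩
    · obtain ⟨φ, h0, h1, h2, h3⟩ := exists_policy_of_apply_eq_zero hx hxi
      exact ⟨φ, h0, h1, h2, fun r b a _ => by rw [h3, mul_zero]⟩
  set w : (Fin K → ↥R) → ℝ := fun r => ∏ k ∈ univ.erase i, q k (r k)
  have hw (r b) : w (update r i b) = w r :=
    prod_congr rfl fun k hk => by rw [update_of_ne (ne_of_mem_erase hk)]
  -- the new state `r` is coupled with the old states `update r i b`, `b` drawn from `π · (r i)`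
  set κ : (Fin K → ↥R) → (Fin K → ↥R) → ℝ := fun r s =>
    ∑ b, if s = update r i b then π b (r i) * w r else 0
  rw [funext hthru]
  refine mem_feasibleSet_of_coupling hR (κ := κ) (fun r s => ?_) (fun r => ?_) (fun s => ?_)
    (fun k s => (hφ k s).1) hsum fun r s k h => ?_
  · refine sum_nonneg fun b _ => ?_
    split_ifs
    exacts [mul_nonneg (hπ _ _) (prod_nonneg fun k _ => hq _ _), le_rfl]
  · rw [sum_comm, Fintype.prod_update_apply, ← hcol, sum_mul]
    simp only [sum_ite_eq', mem_univ, if_true]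
    rfl
  · rw [Fintype.sum_sum_update i]
    simp only [update_idem, update_eq_self, update_self, hw]
    rw [sum_comm, ← mul_prod_erase _ _ (mem_univ i), ← hrow, sum_mul]
    simp only [sum_ite_eq, mem_univ, if_true]
    rfl
  · obtain ⟨b, -, hb⟩ := exists_ne_zero_of_sum_ne_zero (left_ne_zero_of_mul h)
    split_ifs at hb with hs
    · subst hs
      by_cases hk : k = i
      · subst hk
        rw [update_self]
        by_contra hlt
        exact mul_ne_zero (left_ne_zero_of_mul hb) (right_ne_zero_of_mul h)
          (hidle _ b (r k) (by exact_mod_cast not_le.mp hlt))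
      · rw [update_of_ne hk]
    · exact absurd rfl hb

end Feasibility

theorem stmt6_general (K : ℕ) (R : Finset ℝ)
    (hRnn : ∀ r ∈ R, 0 ≤ r)
    (q : Fin K → ↥R → ℝ) (hqnn : ∀ k v, 0 ≤ q k v) (hq1 : ∀ k, ∑ v, q k v = 1)
    (p : (Fin K → ↥R) → ℝ) (hindep : ∀ r, p r = ∏ k, q k (r k))
    (i j : Fin K)
    (hdom : ∀ a : ℝ, ∑ v ∈ Finset.univ.filter (fun v : ↥R => a < (v : ℝ)), q j v ≤
      ∑ v ∈ Finset.univ.filter (fun v : ↥R => a < (v : ℝ)), q i v)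
    (x : Fin K → ℝ) (hx : x ∈ FeasibleSet K R p) (hxi : x i = 0) :
    (fun m => x (Equiv.swap i j m)) ∈ FeasibleSet K R p := by
  obtain rfl : p = fun r => ∏ k, q k (r k) := funext hindep
  rcases eq_or_ne i j with rfl | hij
  · simpa using hx
  set σ := Equiv.swap i j
  have hswapped := mem_feasibleSet_comp_perm σ hx
  have hresampled := mem_feasibleSet_update_of_coupling hRnn (fun k => hqnn (σ k))
    (i := j) (π := fun b a => q i b * q j a) (ν := q j)
    (fun b a => mul_nonneg (hqnn i b) (hqnn j a))
    (fun b => by rw [← mul_sum, hq1, mul_one, Equiv.swap_apply_right])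
    (fun a => by rw [← sum_mul, hq1, one_mul]) hswapped
    (Or.inr (by simpa [σ] using hxi))
  obtain ⟨π, hπ, hrow, hcol, hmono⟩ := exists_monotone_coupling (hqnn j) (hqnn i) (hq1 j) (hq1 i)
    fun a => by simpa using hdom a
  have hq' : ∀ k v, 0 ≤ Function.update (fun k => q (σ k)) j (q j) k v :=
    (Function.forall_update_iff _ fun (_ : Fin K) (g : ↥R → ℝ) => ∀ v, 0 ≤ g v).2
      ⟨hqnn j, fun _ _ => hqnn _⟩
  have himproved := mem_feasibleSet_update_of_coupling hRnn hq' (i := i) hπ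
    (fun b => by rw [hrow, Function.update_of_ne hij, Equiv.swap_apply_left]) hcol hresampled
    (Or.inl hmono)
  convert himproved using 4 with r k
  rcases eq_or_ne k i with rfl | hki
  · simp
  rcases eq_or_ne k j with rfl | hkj
  · simp [hki]
  · simp [hki, hkj, σ, Equiv.swap_apply_of_ne_of_ne]

/-- Swap lemma: if the channel-rate vector has independent coordinates with marginals
`q k`, and user `i`'s channel stochastically dominates user `j`'s channel, then for any
feasible throughput vector `x` with `x i = 0`, the vector obtained by swapping
coordinates `i` and `j` (giving user `i` throughput `x j` and user `j` throughput `0`)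
is also feasible. -/
theorem stmt6 (K : ℕ) (hK : 1 ≤ K) (R : Finset ℝ) (hRne : R.Nonempty)
    (hRnn : ∀ r ∈ R, 0 ≤ r)
    (q : Fin K → ↥R → ℝ) (hqnn : ∀ k v, 0 ≤ q k v) (hq1 : ∀ k, ∑ v, q k v = 1)
    (p : (Fin K → ↥R) → ℝ) (hindep : ∀ r, p r = ∏ k, q k (r k))
    (i j : Fin K)
    (hdom : ∀ a : ℝ, ∑ v ∈ Finset.univ.filter (fun v : ↥R => a < (v : ℝ)), q j v ≤
      ∑ v ∈ Finset.univ.filter (fun v : ↥R => a < (v : ℝ)), q i v)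
    (x : Fin K → ℝ) (hx : x ∈ FeasibleSet K R p) (hxi : x i = 0) :
    (fun m => x (Equiv.swap i j m)) ∈ FeasibleSet K R p :=
  stmt6_general K R hRnn q hqnn hq1 p hindep i j hdom x hx hxi
end

section
/- Suppose the channel-rate vector has independent coordinates, p(r) = Π_{k=1}^K ℙ(R_k = r_k) for independent ℛ-valued random variables R_1,…,R_K, and suppose the channels are stochastically ordered: there is a permutation σ of {1,…,K} with ℙ(R_{σ(1)} > a) ≥ ℙ(R_{σ(2)} > a) ≥ … ≥ ℙ(R_{σ(K)} > a) for all a ∈ ℝ. Then 𝒳 satisfies subspace monotonicity with respect to σ: for every subset S ⊆ {1,…,K} there exists a bijection τ from S onto {σ(1),…,σ(|S|)} such that for every x ∈ 𝒳(S), the vector y defined by y_{τ(k)} = x_k for k ∈ S and y_m = 0 for m ∉ {σ(1),…,σ(|S|)} belongs to 𝒳 (and hence to 𝒳({σ(1),…,σ(|S|)})). -/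
open Finset

lemma overlap_eq (a b t1 t2 : ℝ) (hab : a ≤ b) (ht : t1 ≤ t2) :
    max 0 (min b t2 - max a t1) = min b (max a t2) - min b (max a t1) := by
  simp only [min_def, max_def]
  split_ifs <;> linarith

lemma coupling_exists (R : Finset ℝ) (qa qb : ↥R → ℝ)
    (ha0 : ∀ v, 0 ≤ qa v) (hb0 : ∀ v, 0 ≤ qb v)
    (ha1 : ∑ v, qa v = 1) (hb1 : ∑ v, qb v = 1)
    (hdom : ∀ t : ℝ, ∑ v ∈ univ.filter (fun v : ↥R => t < (v : ℝ)), qa v ≤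
      ∑ v ∈ univ.filter (fun v : ↥R => t < (v : ℝ)), qb v) :
    ∃ c : ↥R → ↥R → ℝ, (∀ v w, 0 ≤ c v w) ∧ (∀ v, ∑ w, c v w = qa v) ∧
      (∀ w, ∑ v, c v w = qb w) ∧ (∀ v w, c v w ≠ 0 → (v : ℝ) ≤ (w : ℝ)) := by
  classical
  set n := R.card with hn
  set e : Fin n ≃o ↥R := R.orderIsoOfFin rfl with he
  set a' : ℕ → ℝ := fun t => if h : t < n then qa (e ⟨t, h⟩) else 0 with ha'
  set b' : ℕ → ℝ := fun t => if h : t < n then qb (e ⟨t, h⟩) else 0 with hb'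
  set A : ℕ → ℝ := fun t => ∑ j ∈ range t, a' j with hA
  set B : ℕ → ℝ := fun t => ∑ j ∈ range t, b' j with hB
  -- generic facts
  have key : ∀ (q : ↥R → ℝ) (f' : ℕ → ℝ) (F : ℕ → ℝ),
      (f' = fun t => if h : t < n then q (e ⟨t, h⟩) else 0) →
      (F = fun t => ∑ j ∈ range t, f' j) → (∀ v, 0 ≤ q v) → (∑ v, q v = 1) →
      (Monotone F) ∧ (∀ t, n ≤ t → F t = 1) ∧ (F 0 = 0) ∧
      (∀ i : Fin n, F ((i : ℕ) + 1)
        + ∑ v ∈ univ.filter (fun v : ↥R => ((e i : ℝ)) < (v : ℝ)), q v = 1) := by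
    intro q f' F hf' hF h0 h1
    have hf'0 : ∀ t, 0 ≤ f' t := by
      intro t; rw [hf']; dsimp only; split
      · exact h0 _
      · exact le_rfl
    have hf'v : ∀ j : Fin n, f' j = q (e j) := by
      intro j; rw [hf']; dsimp only; rw [dif_pos j.2]
    have hmono : Monotone F := by
      intro s t hst
      rw [hF]; exact Finset.sum_le_sum_of_subset_of_nonneg
        (Finset.range_subset_range.2 hst) (fun j _ _ => hf'0 j)
    have hFn : F n = 1 := by
      have h2 : ∑ j : Fin n, f' j = ∑ v, q v :=
        Fintype.sum_equiv e.toEquiv _ q (fun j => hf'v j)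
      rw [hF]; dsimp only
      rw [← Fin.sum_univ_eq_sum_range f' n, h2, h1]
    have hstab : ∀ t, n ≤ t → F t = 1 := by
      intro t ht
      have h3 : F t = F n := by
        rw [hF]; dsimp only
        refine (Finset.sum_subset (Finset.range_subset_range.2 ht) ?_).symm
        intro j _ hj
        rw [Finset.mem_range, not_lt] at hj
        rw [hf']; dsimp only; rw [dif_neg (by omega)]
      rw [h3, hFn]
    refine ⟨hmono, hstab, by rw [hF]; simp, ?_⟩
    intro i
    have htail : ∑ v ∈ univ.filter (fun v : ↥R => ((e i : ℝ)) < (v : ℝ)), q v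
        = ∑ j ∈ range n, if (i : ℕ) < j then f' j else 0 := by
      rw [Finset.sum_filter]
      rw [← Fin.sum_univ_eq_sum_range (fun j => if (i:ℕ) < j then f' j else 0) n]
      refine (Fintype.sum_equiv e.toEquiv
        (fun j : Fin n => if (i:ℕ) < (j:ℕ) then f' (j:ℕ) else 0)
        (fun v => if ((e i : ℝ)) < (v : ℝ) then q v else 0) ?_).symm
      intro j
      have hcoe : ((e i : ℝ) < ((e j : ℝ))) ↔ i < j :=
        Iff.trans Subtype.coe_lt_coe e.lt_iff_lt
      have hnat : ((i:ℕ) < (j:ℕ)) ↔ i < j := Fin.lt_def.symm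
      show (if (i:ℕ) < (j:ℕ) then f' (j:ℕ) else 0)
          = if ((e i : ℝ)) < ((e j : ℝ)) then q (e j) else 0
      by_cases h : i < j
      · rw [if_pos (hnat.2 h), if_pos (hcoe.2 h), hf'v]
      · rw [if_neg (fun hh => h (hnat.1 hh)), if_neg (fun hh => h (hcoe.1 hh))]
    rw [htail, ← hFn, hF]
    dsimp only
    have h2 : ∑ j ∈ range ((i:ℕ)+1), f' j = ∑ j ∈ range n, if j < (i:ℕ)+1 then f' j else 0 := by
      rw [← Finset.sum_filter]
      congr 1
      ext j
      simp only [Finset.mem_filter, Finset.mem_range]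
      have := i.2
      omega
    rw [h2, ← Finset.sum_add_distrib]
    refine Finset.sum_congr rfl ?_
    intro j _
    by_cases h : j < (i:ℕ)+1
    · rw [if_pos h, if_neg (by omega)]; ring
    · rw [if_neg h, if_pos (by omega)]; ring
  obtain ⟨hAmono, hAstab, hA0, hAtail⟩ := key qa a' A ha' hA ha0 ha1
  obtain ⟨hBmono, hBstab, hB0, hBtail⟩ := key qb b' B hb' hB hb0 hb1
  have hA01 : ∀ t, 0 ≤ A t ∧ A t ≤ 1 := by
    intro t
    constructor
    · rw [← hA0]; exact hAmono (Nat.zero_le t)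
    · rcases le_total t n with h | h
      · rw [← hAstab n le_rfl]; exact hAmono h
      · rw [hAstab t h]
  have hB01 : ∀ t, 0 ≤ B t ∧ B t ≤ 1 := by
    intro t
    constructor
    · rw [← hB0]; exact hBmono (Nat.zero_le t)
    · rcases le_total t n with h | h
      · rw [← hBstab n le_rfl]; exact hBmono h
      · rw [hBstab t h]
  -- stochastic dominance gives B ≤ A pointwise
  have hBA : ∀ t, B t ≤ A t := by
    intro t
    match t with
    | 0 => rw [hA0, hB0]
    | (s+1) =>
      by_cases h : s < n
      · have hi := hAtail ⟨s, h⟩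
        have hj := hBtail ⟨s, h⟩
        have := hdom ((e ⟨s, h⟩ : ℝ))
        simp only at hi hj
        linarith
      · rw [hAstab (s+1) (by omega), hBstab (s+1) (by omega)]
  -- the quantile coupling on indices
  set c' : ℕ → ℕ → ℝ := fun i j => max 0 (min (A (i+1)) (B (j+1)) - max (A i) (B j)) with hc'
  have hc'0 : ∀ i j, 0 ≤ c' i j := fun i j => le_max_left 0 _
  have hrow : ∀ i, i < n → ∑ j ∈ range n, c' i j = a' i := by
    intro i hi
    have hAi : A i ≤ A (i+1) := hAmono (by omega)
    have hterm : ∀ j, c' i j =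
        (fun j => min (A (i+1)) (max (A i) (B j))) (j+1)
          - (fun j => min (A (i+1)) (max (A i) (B j))) j :=
      fun j => overlap_eq _ _ _ _ hAi (hBmono (by omega))
    rw [Finset.sum_congr rfl (fun j _ => hterm j),
      Finset.sum_range_sub (fun j => min (A (i+1)) (max (A i) (B j))) n]
    rw [hBstab n le_rfl, hB0]
    rw [max_eq_left (hA01 i).1, min_eq_right hAi]
    rw [max_eq_right (hA01 i).2, min_eq_left (hA01 (i+1)).2]
    have : A (i+1) = A i + a' i := Finset.sum_range_succ a' i
    rw [this]; ring
  have hcol : ∀ j, j < n → ∑ i ∈ range n, c' i j = b' j := by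
    intro j hj
    have hBj : B j ≤ B (j+1) := hBmono (by omega)
    have hterm : ∀ i, c' i j =
        (fun i => min (B (j+1)) (max (B j) (A i))) (i+1)
          - (fun i => min (B (j+1)) (max (B j) (A i))) i := by
      intro i
      have h2 := overlap_eq (B j) (B (j+1)) (A i) (A (i+1)) hBj (hAmono (by omega))
      rw [hc']; dsimp only
      rw [min_comm (A (i+1)) (B (j+1)), max_comm (A i) (B j)]
      exact h2
    rw [Finset.sum_congr rfl (fun i _ => hterm i),
      Finset.sum_range_sub (fun i => min (B (j+1)) (max (B j) (A i))) n]
    rw [hAstab n le_rfl, hA0]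
    rw [max_eq_left (hB01 j).1, min_eq_right hBj]
    rw [max_eq_right (hB01 j).2, min_eq_left (hB01 (j+1)).2]
    have : B (j+1) = B j + b' j := Finset.sum_range_succ b' j
    rw [this]; ring
  have hsupp : ∀ i j, j < i → c' i j = 0 := by
    intro i j hji
    have h1 : B (j+1) ≤ A i := le_trans (hBA (j+1)) (hAmono (by omega))
    have h2 : min (A (i+1)) (B (j+1)) - max (A i) (B j) ≤ 0 := by
      have := le_max_left (A i) (B j)
      have := min_le_right (A (i+1)) (B (j+1))
      linarith
    rw [hc']; dsimp only
    exact max_eq_left h2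
  refine ⟨fun v w => c' ((e.symm v : Fin n) : ℕ) ((e.symm w : Fin n) : ℕ),
    fun v w => hc'0 _ _, ?_, ?_, ?_⟩
  · intro v
    set i : Fin n := e.symm v with hi
    have h1 : ∑ w, c' (i:ℕ) ((e.symm w : Fin n) : ℕ) = ∑ j : Fin n, c' (i:ℕ) (j:ℕ) :=
      (Fintype.sum_equiv e.toEquiv (fun j : Fin n => c' (i:ℕ) (j:ℕ))
        (fun w => c' (i:ℕ) ((e.symm w : Fin n) : ℕ))
        (fun j => by simp)).symm
    rw [h1, Fin.sum_univ_eq_sum_range (fun j => c' (i:ℕ) j) n, hrow (i:ℕ) i.2]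
    rw [ha']; dsimp only; rw [dif_pos i.2]
    congr 1
    rw [show (⟨(i:ℕ), i.2⟩ : Fin n) = i from Fin.eta i i.2, hi, e.apply_symm_apply]
  · intro w
    set j : Fin n := e.symm w with hj
    have h1 : ∑ v, c' ((e.symm v : Fin n) : ℕ) (j:ℕ) = ∑ i : Fin n, c' (i:ℕ) (j:ℕ) :=
      (Fintype.sum_equiv e.toEquiv (fun i : Fin n => c' (i:ℕ) (j:ℕ))
        (fun v => c' ((e.symm v : Fin n) : ℕ) (j:ℕ))
        (fun i => by simp)).symm
    rw [h1, Fin.sum_univ_eq_sum_range (fun i => c' i (j:ℕ)) n, hcol (j:ℕ) j.2]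
    rw [hb']; dsimp only; rw [dif_pos j.2]
    congr 1
    rw [show (⟨(j:ℕ), j.2⟩ : Fin n) = j from Fin.eta j j.2, hj, e.apply_symm_apply]
  · intro v w hne
    have hle : ((e.symm v : Fin n) : ℕ) ≤ ((e.symm w : Fin n) : ℕ) := by
      by_contra h
      exact hne (hsupp _ _ (by omega))
    have h2 : e.symm v ≤ e.symm w := hle
    have h3 : v ≤ w := by
      have := e.symm.le_iff_le.1 h2
      simpa using this
    exact Subtype.coe_le_coe.2 h3


lemma strictMono_nat_le {m n : ℕ} (g : Fin m → Fin n) (hg : StrictMono g) :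
    ∀ j : Fin m, (j : ℕ) ≤ (g j : ℕ) := by
  have H : ∀ t (h : t < m), t ≤ (g ⟨t, h⟩ : ℕ) := by
    intro t
    induction t with
    | zero => intro h; exact Nat.zero_le _
    | succ s ih =>
      intro h
      have hs : s < m := Nat.lt_of_succ_lt h
      have := hg (show (⟨s, hs⟩ : Fin m) < ⟨s+1, h⟩ by simp [Fin.lt_def])
      rw [Fin.lt_def] at this
      exact Nat.succ_le_of_lt (lt_of_le_of_lt (ih hs) this)
  intro j; simpa using H j j.2

lemma perm_exists (K m : ℕ) (hmK : m ≤ K) (S : Finset (Fin K)) (hS : S.card = m)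
    (σ : Equiv.Perm (Fin K)) :
    ∃ π : Equiv.Perm (Fin K),
      (S.image ⇑π = (univ.filter (fun i : Fin K => (i : ℕ) < m)).image ⇑σ) ∧
      (∀ k ∈ S, σ.symm (π k) ≤ σ.symm k) := by
  classical
  set M : Finset (Fin K) := univ.filter (fun i : Fin K => (i : ℕ) < m) with hM
  have hMmem : ∀ i : Fin K, i ∈ M ↔ (i : ℕ) < m := by
    intro i; rw [hM]; simp
  have hMcard : M.card = m := by
    apply Finset.card_eq_of_bijective (fun i hi => ⟨i, lt_of_lt_of_le hi hmK⟩)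
    · intro a ha
      rw [hMmem] at ha
      exact ⟨(a : ℕ), ha, by simp⟩
    · intro i hi
      rw [hMmem]
      simpa using hi
    · intro i j hi hj hij
      simpa using congrArg Fin.val hij
  set S' : Finset (Fin K) := S.image ⇑σ.symm with hS'
  have hS'card : S'.card = m := by
    rw [hS', Finset.card_image_of_injective _ σ.symm.injective, hS]
  set eS : Fin m ≃o ↥S' := S'.orderIsoOfFin hS'card with heS
  set eM : ↥M ≃ Fin m :=
    { toFun := fun x => ⟨((x : Fin K) : ℕ), (hMmem _).1 x.2⟩
      invFun := fun j => ⟨⟨(j : ℕ), lt_of_lt_of_le j.2 hmK⟩, (hMmem _).2 j.2⟩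
      left_inv := fun x => by ext; rfl
      right_inv := fun j => by ext; rfl } with heM
  set e1 : {x // x ∈ S'} ≃ {x // x ∈ M} := eS.symm.toEquiv.trans eM.symm with he1
  set ρ : Equiv.Perm (Fin K) := e1.extendSubtype with hρ
  have hρmem : ∀ s, s ∈ S' → ρ s ∈ M := fun s hs => e1.extendSubtype_mem s hs
  have hρle : ∀ s, s ∈ S' → ((ρ s : Fin K) : ℕ) ≤ (s : ℕ) := by
    intro s hs
    have h1 : ρ s = (e1 ⟨s, hs⟩ : Fin K) := e1.extendSubtype_apply_of_mem s hs
    set j : Fin m := eS.symm ⟨s, hs⟩ with hj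
    have h2 : (e1 ⟨s, hs⟩ : Fin K) = ⟨(j : ℕ), lt_of_lt_of_le j.2 hmK⟩ := rfl
    have h3 : ((eS j : ↥S') : Fin K) = s := by
      rw [hj, eS.apply_symm_apply]
    have h4 : (j : ℕ) ≤ ((eS j : ↥S') : Fin K) := by
      refine strictMono_nat_le (fun j => ((eS j : ↥S') : Fin K)) ?_ j
      intro a b hab
      have := eS.lt_iff_lt.2 hab
      exact Subtype.coe_lt_coe.2 this
    rw [h1, h2]
    rw [h3] at h4
    exact h4
  set π : Equiv.Perm (Fin K) := (σ.symm.trans ρ).trans σ with hπ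
  have hπval : ∀ k, π k = σ (ρ (σ.symm k)) := fun k => rfl
  refine ⟨π, ?_, ?_⟩
  · have hsub : S.image ⇑π ⊆ M.image ⇑σ := by
      intro a ha
      rw [Finset.mem_image] at ha
      obtain ⟨k, hk, hka⟩ := ha
      rw [Finset.mem_image]
      refine ⟨ρ (σ.symm k), hρmem _ ?_, by rw [← hka, hπval]⟩
      rw [hS', Finset.mem_image]
      exact ⟨k, hk, rfl⟩
    refine Finset.eq_of_subset_of_card_le hsub ?_
    rw [Finset.card_image_of_injective _ σ.injective, hMcard,
      Finset.card_image_of_injective _ π.injective, hS]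
  · intro k hk
    have hs : σ.symm k ∈ S' := by
      rw [hS', Finset.mem_image]; exact ⟨k, hk, rfl⟩
    have := hρle (σ.symm k) hs
    rw [hπval, Equiv.symm_apply_apply]
    exact this



lemma transfer (K : ℕ) (R : Finset ℝ) (hRnn : ∀ r ∈ R, 0 ≤ r)
    (qa qb : Fin K → ↥R → ℝ)
    (hqa0 : ∀ m v, 0 ≤ qa m v)
    (c : Fin K → ↥R → ↥R → ℝ)
    (hc0 : ∀ m v w, 0 ≤ c m v w)
    (hcl : ∀ m v, ∑ w, c m v w = qa m v)
    (hcr : ∀ m w, ∑ v, c m v w = qb m w)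
    (φ : Fin K → (Fin K → ↥R) → ℝ)
    (hφ01 : ∀ k r, φ k r ∈ Set.Icc (0:ℝ) 1)
    (hφ1 : ∀ r, ∑ k, φ k r ≤ 1)
    (z : Fin K → ℝ)
    (hz : ∀ k, z k = ∑ r, φ k r * (∏ m, qa m (r m)) * ((r k : ℝ)))
    (hsup : ∀ k, (∀ v w, c k v w ≠ 0 → (v : ℝ) ≤ (w : ℝ)) ∨ (∀ r, φ k r = 0)) :
    z ∈ FeasibleSet K R (fun r => ∏ m, qb m (r m)) := by
  classical
  set pb : (Fin K → ↥R) → ℝ := fun r' => ∏ m, qb m (r' m) with hpb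
  set C : (Fin K → ↥R) → (Fin K → ↥R) → ℝ := fun r r' => ∏ m, c m (r m) (r' m) with hC
  have hC0 : ∀ r r', 0 ≤ C r r' := fun r r' =>
    Finset.prod_nonneg (fun m _ => hc0 m (r m) (r' m))
  have hCl : ∀ r, ∑ r', C r r' = ∏ m, qa m (r m) := by
    intro r
    have h1 : ∑ r', C r r' = ∏ m, ∑ w, c m (r m) w :=
      (Fintype.prod_sum (fun m (w : ↥R) => c m (r m) w)).symm
    rw [h1]
    exact Finset.prod_congr rfl (fun m _ => hcl m (r m))
  have hCr : ∀ r', ∑ r, C r r' = pb r' := by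
    intro r'
    have h1 : ∑ r, C r r' = ∏ m, ∑ v, c m v (r' m) :=
      (Fintype.prod_sum (fun m (v : ↥R) => c m v (r' m))).symm
    rw [h1]
    exact Finset.prod_congr rfl (fun m _ => hcr m (r' m))
  have hpb0 : ∀ r', 0 ≤ pb r' := by
    intro r'
    rw [← hCr]
    exact Finset.sum_nonneg (fun r _ => hC0 r r')
  set N : Fin K → (Fin K → ↥R) → ℝ := fun k r' => ∑ r, φ k r * C r r' with hN
  have hN0 : ∀ k r', 0 ≤ N k r' := fun k r' =>
    Finset.sum_nonneg (fun r _ => mul_nonneg (hφ01 k r).1 (hC0 r r'))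
  have hNsum : ∀ r', ∑ k, N k r' ≤ pb r' := by
    intro r'
    rw [hN]
    rw [Finset.sum_comm]
    calc ∑ r, ∑ k, φ k r * C r r' = ∑ r, (∑ k, φ k r) * C r r' := by
          refine Finset.sum_congr rfl (fun r _ => ?_)
          rw [Finset.sum_mul]
      _ ≤ ∑ r, 1 * C r r' := by
          refine Finset.sum_le_sum (fun r _ => ?_)
          exact mul_le_mul_of_nonneg_right (hφ1 r) (hC0 r r')
      _ = pb r' := by simp [hCr r']
  have hNle : ∀ k r', N k r' ≤ pb r' := by
    intro k r'
    refine le_trans ?_ (hNsum r')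
    exact Finset.single_le_sum (fun k' _ => hN0 k' r') (Finset.mem_univ k)
  have hrnn : ∀ (r : Fin K → ↥R) (k : Fin K), (0:ℝ) ≤ (r k : ℝ) :=
    fun r k => hRnn _ (r k).2
  set V : Fin K → ℝ := fun k => ∑ r', N k r' * ((r' k : ℝ)) with hV
  have hV0 : ∀ k, 0 ≤ V k := fun k =>
    Finset.sum_nonneg (fun r' _ => mul_nonneg (hN0 k r') (hrnn r' k))
  have hz0 : ∀ k, 0 ≤ z k := by
    intro k
    rw [hz]
    refine Finset.sum_nonneg (fun r _ => ?_)
    exact mul_nonneg (mul_nonneg (hφ01 k r).1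
      (Finset.prod_nonneg (fun m _ => hqa0 m (r m)))) (hrnn r k)
  have hzV : ∀ k, z k ≤ V k := by
    intro k
    rcases hsup k with hs | hs
    · rw [hz, hV]
      dsimp only
      have hform : ∀ r, φ k r * (∏ m, qa m (r m)) * ((r k : ℝ))
          = ∑ r', φ k r * C r r' * ((r k : ℝ)) := by
        intro r
        rw [← hCl r, Finset.mul_sum, Finset.sum_mul]
      calc ∑ r, φ k r * (∏ m, qa m (r m)) * ((r k : ℝ))
          = ∑ r, ∑ r', φ k r * C r r' * ((r k : ℝ)) :=
            Finset.sum_congr rfl (fun r _ => hform r)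
        _ ≤ ∑ r, ∑ r', φ k r * C r r' * ((r' k : ℝ)) := by
            refine Finset.sum_le_sum (fun r _ => Finset.sum_le_sum (fun r' _ => ?_))
            by_cases hCz : C r r' = 0
            · rw [hCz]; ring_nf; exact le_rfl
            · have hck : c k (r k) (r' k) ≠ 0 := by
                intro h0
                exact hCz (Finset.prod_eq_zero (Finset.mem_univ k) h0)
              have := hs (r k) (r' k) hck
              exact mul_le_mul_of_nonneg_left this
                (mul_nonneg (hφ01 k r).1 (hC0 r r'))
        _ = ∑ r', N k r' * ((r' k : ℝ)) := by
            rw [Finset.sum_comm]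
            refine Finset.sum_congr rfl (fun r' _ => ?_)
            rw [hN]; dsimp only
            rw [Finset.sum_mul]
    · have hzk : z k = 0 := by
        rw [hz]
        refine Finset.sum_eq_zero (fun r _ => ?_)
        rw [hs r]; ring
      rw [hzk]; exact hV0 k
  set α : Fin K → ℝ := fun k => if V k = 0 then 0 else z k / V k with hα
  have hα01 : ∀ k, 0 ≤ α k ∧ α k ≤ 1 := by
    intro k
    rw [hα]; dsimp only
    split
    · exact ⟨le_rfl, zero_le_one⟩
    · rename_i h
      have hVpos : 0 < V k := lt_of_le_of_ne (hV0 k) (Ne.symm h)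
      exact ⟨div_nonneg (hz0 k) (hV0 k), (div_le_one hVpos).2 (hzV k)⟩
  have hαV : ∀ k, α k * V k = z k := by
    intro k
    rw [hα]; dsimp only
    split
    · rename_i h
      rw [h, mul_zero]
      have := hzV k
      rw [h] at this
      linarith [hz0 k]
    · rename_i h
      field_simp
  refine ⟨fun k r' => if pb r' = 0 then 0 else α k * N k r' / pb r', ?_, ?_, ?_⟩
  · intro k r'
    constructor
    · dsimp only; split
      · exact le_rfl
      · rename_i h
        have hpbpos : 0 < pb r' := lt_of_le_of_ne (hpb0 r') (Ne.symm h)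
        exact div_nonneg (mul_nonneg (hα01 k).1 (hN0 k r')) (hpb0 r')
    · dsimp only; split
      · exact zero_le_one
      · rename_i h
        have hpbpos : 0 < pb r' := lt_of_le_of_ne (hpb0 r') (Ne.symm h)
        rw [div_le_one hpbpos]
        calc α k * N k r' ≤ 1 * N k r' :=
              mul_le_mul_of_nonneg_right (hα01 k).2 (hN0 k r')
          _ = N k r' := one_mul _
          _ ≤ pb r' := hNle k r'
  · intro r'
    by_cases h : pb r' = 0
    · simp [h]
    · have hpbpos : 0 < pb r' := lt_of_le_of_ne (hpb0 r') (Ne.symm h)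
      calc ∑ k, (if pb r' = 0 then 0 else α k * N k r' / pb r')
          = ∑ k, α k * N k r' / pb r' := by
            refine Finset.sum_congr rfl (fun k _ => ?_)
            rw [if_neg h]
        _ ≤ ∑ k, N k r' / pb r' := by
            refine Finset.sum_le_sum (fun k _ => ?_)
            have h2 : α k * N k r' ≤ N k r' := by
              calc α k * N k r' ≤ 1 * N k r' :=
                    mul_le_mul_of_nonneg_right (hα01 k).2 (hN0 k r')
                _ = N k r' := one_mul _
            gcongr
        _ ≤ 1 := by
            rw [← Finset.sum_div]
            rw [div_le_one hpbpos]
            exact hNsum r'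
  · intro k
    have hkey : ∀ r', (if pb r' = 0 then 0 else α k * N k r' / pb r') * pb r'
        = α k * N k r' := by
      intro r'
      by_cases h : pb r' = 0
      · rw [if_pos h, h, mul_zero]
        have h1 : N k r' = 0 := le_antisymm (by rw [← h]; exact hNle k r') (hN0 k r')
        rw [h1]; ring
      · rw [if_neg h]
        field_simp
    calc z k = α k * V k := (hαV k).symm
      _ = ∑ r', α k * N k r' * ((r' k : ℝ)) := by
          rw [hV]; dsimp only
          rw [Finset.mul_sum]
          exact Finset.sum_congr rfl (fun r' _ => by ring)
      _ = ∑ r', (if pb r' = 0 then 0 else α k * N k r' / pb r') * pb r' * ((r' k : ℝ)) := by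
          exact Finset.sum_congr rfl (fun r' _ => by rw [hkey r'])


/-- Subspace monotonicity under stochastically ordered independent channels: if the
marginals `q (σ 0), q (σ 1), …` are ordered by stochastic dominance, then for every
subset `S` of users there is a bijection `τ` from `S` onto the `|S|` strongest users
`{σ 0, …, σ (|S|-1)}` such that any feasible throughput vector supported on `S` can be
transported along `τ` (and zeroed elsewhere) to a feasible throughput vector. -/
theorem stmt7 (K : ℕ) (hK : 1 ≤ K) (R : Finset ℝ) (hRne : R.Nonempty)
    (hRnn : ∀ r ∈ R, 0 ≤ r)
    (q : Fin K → ↥R → ℝ) (hqnn : ∀ k v, 0 ≤ q k v) (hq1 : ∀ k, ∑ v, q k v = 1)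
    (p : (Fin K → ↥R) → ℝ) (hindep : ∀ r, p r = ∏ k, q k (r k))
    (σ : Equiv.Perm (Fin K))
    (hord : ∀ i j : Fin K, i ≤ j → ∀ a : ℝ,
      ∑ v ∈ Finset.univ.filter (fun v : ↥R => a < (v : ℝ)), q (σ j) v ≤
        ∑ v ∈ Finset.univ.filter (fun v : ↥R => a < (v : ℝ)), q (σ i) v) :
    ∀ S : Finset (Fin K),
      ∃ τ : Fin K → Fin K,
        Set.BijOn τ ↑S
          ↑((Finset.univ.filter (fun m : Fin K => (m : ℕ) < S.card)).image σ) ∧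
        ∀ x ∈ FeasibleSet K R p, (∀ k, k ∉ S → x k = 0) →
          ∀ y : Fin K → ℝ,
            (∀ k ∈ S, y (τ k) = x k) →
            (∀ m, m ∉ (Finset.univ.filter
                (fun m : Fin K => (m : ℕ) < S.card)).image σ → y m = 0) →
            y ∈ FeasibleSet K R p := by
  classical
  intro S
  have hmK : S.card ≤ K := by
    have h1 := Finset.card_le_univ S
    simpa using h1
  obtain ⟨π, himg, hdomle⟩ := perm_exists K S.card hmK S rfl σ
  refine ⟨⇑π, ?_, ?_⟩
  · have h1 : ↑((univ.filter (fun i : Fin K => (i : ℕ) < S.card)).image ⇑σ)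
        = ⇑π '' ↑S := by
      rw [← himg, Finset.coe_image]
    rw [h1]
    exact Set.InjOn.bijOn_image π.injective.injOn
  · intro x hx hxsupp y hy1 hy2
    obtain ⟨φ, hφ01, hφ1, hφx⟩ := hx
    have hT : ∀ mm : Fin K,
        mm ∈ (univ.filter (fun i : Fin K => (i : ℕ) < S.card)).image ⇑σ
          ↔ π.symm mm ∈ S := by
      intro mm
      rw [← himg, Finset.mem_image]
      constructor
      · rintro ⟨k, hk, rfl⟩; simpa using hk
      · intro h; exact ⟨π.symm mm, h, by simp⟩
    set φh : Fin K → (Fin K → ↥R) → ℝ := fun mm r =>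
      if π.symm mm ∈ S then φ (π.symm mm) (fun l => r (π l)) else 0 with hφh
    have hφh01 : ∀ mm r, φh mm r ∈ Set.Icc (0:ℝ) 1 := by
      intro mm r
      rw [hφh]; dsimp only; split
      · exact hφ01 _ _
      · exact ⟨le_rfl, zero_le_one⟩
    have hφhsum : ∀ r, ∑ mm, φh mm r ≤ 1 := by
      intro r
      have h2 : ∑ mm, φh mm r ≤ ∑ mm, φ (π.symm mm) (fun l => r (π l)) := by
        refine Finset.sum_le_sum (fun mm _ => ?_)
        rw [hφh]; dsimp only; split
        · exact le_rfl
        · exact (hφ01 _ _).1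
      have h3 : ∑ mm, φ (π.symm mm) (fun l => r (π l))
          = ∑ k, φ k (fun l => r (π l)) :=
        Fintype.sum_equiv π.symm _ _ (fun mm => rfl)
      rw [h3] at h2
      exact h2.trans (hφ1 _)
    have hy : ∀ mm, y mm
        = ∑ r, φh mm r * (∏ l, q (π.symm l) (r l)) * ((r mm : ℝ)) := by
      intro mm
      by_cases hmem : π.symm mm ∈ S
      · have hymm : y mm = x (π.symm mm) := by
          have := hy1 (π.symm mm) hmem
          simpa using this
        rw [hymm, hφx (π.symm mm)]
        set e0 : (Fin K → ↥R) ≃ (Fin K → ↥R) :=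
          Equiv.arrowCongr π (Equiv.refl ↥R) with he0
        refine Fintype.sum_equiv e0
          (fun s => φ (π.symm mm) s * p s * ((s (π.symm mm) : ℝ)))
          (fun r => φh mm r * (∏ l, q (π.symm l) (r l)) * ((r mm : ℝ))) ?_
        intro s
        have he0v : ∀ l, e0 s l = s (π.symm l) := fun l => rfl
        have h4 : (fun l => (e0 s) (π l)) = s := by
          funext l
          rw [he0v (π l), Equiv.symm_apply_apply]
        have h5 : (∏ l, q (π.symm l) ((e0 s) l)) = p s := by
          rw [hindep]
          calc ∏ l, q (π.symm l) ((e0 s) l)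
              = ∏ l, q (π.symm l) (s (π.symm l)) :=
                Finset.prod_congr rfl (fun l _ => by rw [he0v l])
            _ = ∏ k, q k (s k) := Equiv.prod_comp π.symm (fun k => q k (s k))
        rw [hφh]; dsimp only
        rw [if_pos hmem, h4, h5, he0v mm]
      · have hymm : y mm = 0 := hy2 mm (fun h => hmem ((hT mm).1 h))
        rw [hymm]
        refine (Finset.sum_eq_zero (fun r _ => ?_)).symm
        rw [hφh]; dsimp only
        rw [if_neg hmem]; ring
    have hcoup : ∀ mm : Fin K, ∃ c : ↥R → ↥R → ℝ,
        (∀ v w, 0 ≤ c v w) ∧ (∀ v, ∑ w, c v w = q (π.symm mm) v) ∧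
        (∀ w, ∑ v, c v w = q mm w) ∧
        (π.symm mm ∈ S → ∀ v w, c v w ≠ 0 → (v : ℝ) ≤ (w : ℝ)) := by
      intro mm
      by_cases hmem : π.symm mm ∈ S
      · have hdomtail : ∀ t : ℝ,
            ∑ v ∈ univ.filter (fun v : ↥R => t < (v : ℝ)), q (π.symm mm) v ≤
              ∑ v ∈ univ.filter (fun v : ↥R => t < (v : ℝ)), q mm v := by
          intro t
          have hle : σ.symm mm ≤ σ.symm (π.symm mm) := by
            have := hdomle (π.symm mm) hmem
            simpa using this
          have h6 := hord (σ.symm mm) (σ.symm (π.symm mm)) hle t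
          simpa using h6
        obtain ⟨c, h0, hl, hr, hs⟩ := coupling_exists R (q (π.symm mm)) (q mm)
          (hqnn _) (hqnn _) (hq1 _) (hq1 _) hdomtail
        exact ⟨c, h0, hl, hr, fun _ => hs⟩
      · refine ⟨fun v w => q (π.symm mm) v * q mm w,
          fun v w => mul_nonneg (hqnn _ _) (hqnn _ _), ?_, ?_,
          fun h => absurd h hmem⟩
        · intro v; rw [← Finset.mul_sum, hq1, mul_one]
        · intro w; rw [← Finset.sum_mul, hq1, one_mul]
    choose c hc0 hcl hcr hcs using hcoup
    have hmain := transfer K R hRnn (fun mm => q (π.symm mm)) q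
      (fun mm v => hqnn _ v) c hc0 hcl hcr φh hφh01 hφhsum y hy ?_
    · have hp : p = fun r => ∏ mm, q mm (r mm) := funext hindep
      rw [hp]
      exact hmain
    · intro k
      by_cases hmem : π.symm k ∈ S
      · exact Or.inl (hcs k hmem)
      · refine Or.inr (fun r => ?_)
        rw [hφh]; dsimp only
        rw [if_neg hmem]
end

section
/- Let X ⊆ ℝ^K be a compact convex set of nonnegative vectors containing at least one vector with all coordinates strictly positive. Then X contains exactly one proportionally fair vector: there is a unique x ∈ X with all coordinates strictly positive such that Σ_{k=1}^K (y_k − x_k)/x_k ≤ 0 for every y ∈ X. -/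
/-!
The proportionally fair vector is the maximiser of `∏ k, w k` (equivalently of `∑ k, log (w k)`)
over `X`. A maximiser exists by compactness, and it is strictly positive because its product is at
least that of the positive vector `z`. Fermat's rule in the feasible direction `y - x` then gives
`(∏ k, x k) * ∑ k, (y k - x k) / x k ≤ 0`. For uniqueness, adding the fairness inequalities of two
fair vectors `x`, `x'` yields `∑ k, (x' k - x k) ^ 2 / (x k * x' k) ≤ 0`.
-/

open Finset

def IsProportionallyFair {ι : Type*} [Fintype ι] (X : Set (ι → ℝ)) (x : ι → ℝ) : Prop :=
  x ∈ X ∧ (∀ k, 0 < x k) ∧ ∀ y ∈ X, ∑ k, (y k - x k) / x k ≤ 0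

section
variable {ι : Type*} [Fintype ι] {X : Set (ι → ℝ)}

theorem IsProportionallyFair.eq {x x' : ι → ℝ}
    (hx : IsProportionallyFair X x) (hx' : IsProportionallyFair X x') : x = x' := by
  obtain ⟨hxX, hxpos, hxfair⟩ := hx
  obtain ⟨hx'X, hx'pos, hx'fair⟩ := hx'
  have hterm : ∀ k, (x' k - x k) / x k + (x k - x' k) / x' k
      = (x' k - x k) ^ 2 / (x k * x' k) := fun k => by
    field_simp [(hxpos k).ne', (hx'pos k).ne']
    ring
  have hterm_nonneg : ∀ k, 0 ≤ (x' k - x k) ^ 2 / (x k * x' k) := fun k =>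
    div_nonneg (sq_nonneg _) (mul_pos (hxpos k) (hx'pos k)).le
  have hsum : ∑ k, (x' k - x k) ^ 2 / (x k * x' k) ≤ 0 := by
    simp only [← hterm, sum_add_distrib]
    linarith [hxfair x' hx'X, hx'fair x hxX]
  have hzero := (sum_eq_zero_iff_of_nonneg fun k _ => hterm_nonneg k).mp
    (le_antisymm hsum (sum_nonneg fun k _ => hterm_nonneg k))
  funext k
  have hk := hzero k (mem_univ k)
  rw [div_eq_zero_iff, pow_eq_zero_iff two_ne_zero, sub_eq_zero] at hk
  exact (hk.resolve_right (mul_pos (hxpos k) (hx'pos k)).ne').symm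

theorem exists_isMaxOn_prod_of_pos (hcomp : IsCompact X)
    (hnn : ∀ x ∈ X, ∀ k, 0 ≤ x k) (hpos : ∃ z ∈ X, ∀ k, 0 < z k) :
    ∃ x ∈ X, (∀ k, 0 < x k) ∧ IsMaxOn (fun w => ∏ k, w k) X x := by
  obtain ⟨z, hzX, hz⟩ := hpos
  have hcont : Continuous fun w : ι → ℝ => ∏ k, w k := by fun_prop
  obtain ⟨x, hxX, hxmax⟩ := hcomp.exists_isMaxOn ⟨z, hzX⟩ hcont.continuousOn
  refine ⟨x, hxX, fun k => (hnn x hxX k).lt_of_ne' fun hk => ?_, hxmax⟩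
  have hzx : ∏ k, z k ≤ ∏ k, x k := hxmax hzX
  rw [prod_eq_zero (mem_univ k) hk] at hzx
  exact hzx.not_gt (prod_pos fun k _ => hz k)

theorem sum_prod_erase_smul_proj_apply [DecidableEq ι] {x : ι → ℝ} (hx : ∀ k, x k ≠ 0)
    (v : ι → ℝ) :
    (∑ i, (∏ j ∈ univ.erase i, x j) • ContinuousLinearMap.proj (R := ℝ) i) v
      = (∏ k, x k) * ∑ k, v k / x k := by
  simp only [FunLike.coe_sum, Finset.sum_apply, smul_apply,
    ContinuousLinearMap.proj_apply, smul_eq_mul, mul_sum]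
  refine sum_congr rfl fun k _ => ?_
  rw [← mul_prod_erase univ x (mem_univ k)]
  field_simp [hx k]

theorem sum_sub_div_nonpos_of_isMaxOn_prod (hconv : Convex ℝ X)
    {x y : ι → ℝ} (hxX : x ∈ X) (hx : ∀ k, 0 < x k)
    (hmax : IsMaxOn (fun w => ∏ k, w k) X x) (hy : y ∈ X) :
    ∑ k, (y k - x k) / x k ≤ 0 := by
  classical
  have hderiv := hmax.localize.hasFDerivWithinAt_nonpos hasFDerivAt_finsetProd.hasFDerivWithinAt
    (sub_mem_posTangentConeAt_of_segment_subset (hconv.segment_subset hxX hy))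
  rw [sum_prod_erase_smul_proj_apply fun k => (hx k).ne'] at hderiv
  exact nonpos_of_mul_nonpos_right hderiv (prod_pos fun k _ => hx k)

end

/-- Existence and uniqueness of the proportionally fair vector: a compact convex set of
nonnegative vectors containing a strictly positive vector contains exactly one
proportionally fair vector, i.e., exactly one `x` with strictly positive coordinates
such that `∑ k, (y k - x k) / x k ≤ 0` for every `y ∈ X`. -/
theorem stmt17 (K : ℕ) (X : Set (Fin K → ℝ)) (hcomp : IsCompact X)
    (hconv : Convex ℝ X) (hnn : ∀ x ∈ X, ∀ k, 0 ≤ x k)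
    (hpos : ∃ z ∈ X, ∀ k, 0 < z k) :
    ∃! x : Fin K → ℝ, x ∈ X ∧ (∀ k, 0 < x k) ∧
      ∀ y ∈ X, ∑ k, (y k - x k) / x k ≤ 0 := by
  obtain ⟨x, hxX, hx, hmax⟩ := exists_isMaxOn_prod_of_pos hcomp hnn hpos
  have hfair : IsProportionallyFair X x :=
    ⟨hxX, hx, fun y hy => sum_sub_div_nonpos_of_isMaxOn_prod hconv hxX hx hmax hy⟩
  exact ⟨x, hfair, fun x' hx' => IsProportionallyFair.eq hx' hfair⟩
end
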